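/- arXiv:1311.0128 — 5 statements merged into one kernel-verified Lean document; each statement's English description precedes it below -/
import Mathlib

section
/- Let d ≥ 3 be an integer and λ, c > 0. Define f : ℝ^d × (0,∞) → ℝ on the open cone {(y,t) : ‖y‖ < ct, t > 0} by f(y,t) = Σ_{k=1}^∞ (λ/(2c))^{k(d-2)} (c²t² − ‖y‖²)^{(k(d−2)−2)/2} / (Γ(k(d/2 − 1)) · Γ((d−1)/2 + (d/2 − 1)k)). Then f satisfies the non-homogeneous iterated Klein–Gordon equation W^{(d−2)} f (y,t) = λ^{2(d−2)} f(y,t) + (2λc)^{d−2} (c²t² − ‖y‖²)^{−d/2} / (√π · Γ(1 − d/2)) on the open cone, where (W u)(y,t) = ∂²u/∂t² − c² Σ_{j=1}^d ∂²u/∂y_j², and where 1/Γ(1 − d/2) is interpreted as 0 when 1 − d/2 is a nonpositive integer (i.e. for even d ≥ 4 the inhomogeneous term vanishes). -/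
open Real

/-- The d'Alembert (wave) operator `W u = ∂²u/∂t² - c² Σ_j ∂²u/∂y_j²` acting on
functions `u : ℝ^d × ℝ → ℝ`. -/
noncomputable def dAlembert (d : ℕ) (c : ℝ)
    (u : EuclideanSpace ℝ (Fin d) × ℝ → ℝ) :
    EuclideanSpace ℝ (Fin d) × ℝ → ℝ :=
  fun p =>
    iteratedDeriv 2 (fun s => u (p.1, s)) p.2
      - c ^ 2 * ∑ j : Fin d,
          iteratedDeriv 2 (fun s => u (WithLp.toLp 2 (Function.update p.1 j s), p.2)) (p.1 j)

/-!
Put `μ = d/2 - 1`, `C = (λ/2c)^(d-2)` and `Ψ_{a,b}(x) = Σ_k C^k x^(kμ+a-1) / (Γ(kμ+a) Γ(kμ+b))`, so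
that `f = C Ψ_{μ,μ+(d-1)/2}(c²t² - ‖y‖²)`. Since `Γ` outgrows every exponential, the series converge
locally uniformly on `x > 0`, and termwise `Ψ_{a,b}' = Ψ_{a-1,b}`; the recurrence of `1/Γ` gives
`x Ψ_{a-1,b} + (b-a) Ψ_{a,b} = Ψ_{a,b-1}`. On functions `g(X)` of `X = c²t² - ‖y‖²` the wave
operator acts as `4c² (X g'' + (d+1)/2 g')`, so for `b - a = (d-1)/2` it sends `Ψ_{a,b}` to
`4c² Ψ_{a-1,b-1}`.
After `d - 2 = 2μ` steps one reaches `Ψ_{-μ,(d-1)/2-μ}`; peeling off its first two terms leaves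
`C² Ψ_{μ,μ+(d-1)/2}` and the `k = 0` term `X^(-d/2) / (Γ(1-d/2) Γ(1/2))`, the `k = 1` term vanishing
because `1/Γ(0) = 0`.
-/

open Filter Topology

namespace Real

theorem inv_Gamma_eq_self_mul_inv_Gamma_add_one (s : ℝ) :
    (Gamma s)⁻¹ = s * (Gamma (s + 1))⁻¹ := by
  rcases ne_or_eq s 0 with h | rfl
  · rw [Gamma_add_one h, mul_inv, mul_inv_cancel_left₀ h]
  · rw [zero_add, Gamma_zero, inv_zero, zero_mul]

theorem one_le_Gamma {y : ℝ} (hy : 2 ≤ y) : 1 ≤ Gamma y :=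
  Gamma_two ▸ Gamma_strictMonoOn_Ici.monotoneOn Set.self_mem_Ici hy hy

theorem exists_rpow_le_mul_Gamma {q : ℝ} (hq : 1 ≤ q) :
    ∃ K, ∀ y, 2 ≤ y → q ^ y ≤ K * Gamma y := by
  obtain ⟨K, hK⟩ :=
    ((FloorSemiring.tendsto_pow_div_factorial_atTop q).const_mul (q ^ 2)).bddAbove_range
  have hK₀ : 0 ≤ K := le_trans (by positivity) (hK (Set.mem_range_self 0))
  refine ⟨K, fun y hy => ?_⟩
  set m := ⌊y - 1⌋₊
  have hm₁ : (m : ℝ) + 1 ≤ y := by linarith [Nat.floor_le (by linarith : 0 ≤ y - 1)]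
  have hm₂ : y ≤ (m : ℝ) + 2 := by linarith [Nat.lt_floor_add_one (y - 1)]
  have hm₃ : (2 : ℝ) ≤ m + 1 := by
    have : 1 ≤ m := Nat.le_floor (by push_cast; linarith)
    exact_mod_cast Nat.succ_le_succ this
  calc q ^ y ≤ q ^ ((m : ℝ) + 2) := rpow_le_rpow_of_exponent_le hq hm₂
    _ = q ^ 2 * (q ^ m / m.factorial) * m.factorial := by
      rw [rpow_add (by linarith), rpow_natCast, rpow_two]
      field_simp
    _ ≤ K * Gamma (m + 1) := by
      rw [Gamma_nat_eq_factorial]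
      gcongr
      exact hK (Set.mem_range_self m)
    _ ≤ K * Gamma y := by
      gcongr
      exact Gamma_strictMonoOn_Ici.monotoneOn hm₃ (le_trans hm₃ hm₁) hm₁

end Real

theorem tendsto_natCast_mul_add_atTop {μ : ℝ} (hμ : 0 < μ) (a : ℝ) :
    Tendsto (fun k : ℕ => k * μ + a) atTop atTop :=
  tendsto_atTop_add_const_right _ a (tendsto_natCast_atTop_atTop.atTop_mul_const hμ)

theorem summable_norm_pow_div_Gamma {μ : ℝ} (hμ : 0 < μ) (B a : ℝ) :
    Summable fun k : ℕ => ‖B ^ k / Gamma (k * μ + a)‖ := by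
  set q := (|B| + 1) ^ μ⁻¹
  have hB : 0 < |B| + 1 := by positivity
  have hq : 1 ≤ q := one_le_rpow (by linarith [abs_nonneg B]) (by positivity)
  have hqμ : q ^ μ = |B| + 1 := by
    rw [← rpow_mul hB.le, inv_mul_cancel₀ hμ.ne', rpow_one]
  obtain ⟨K, hK⟩ := exists_rpow_le_mul_Gamma hq
  have hgeom : Summable fun k : ℕ => K * q ^ (-a) * (|B| / (|B| + 1)) ^ k :=
    (summable_geometric_of_lt_one (by positivity) ((div_lt_one hB).2 (by linarith))).mul_left _
  refine hgeom.of_norm_bounded_eventually_nat ?_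
  filter_upwards [(tendsto_natCast_mul_add_atTop hμ a).eventually_ge_atTop 2] with k hk
  have hΓ : 0 < Gamma (k * μ + a) := Gamma_pos_of_pos (by linarith)
  have hsplit : q ^ (k * μ + a) = (|B| + 1) ^ k * q ^ a := by
    rw [rpow_add (by linarith), mul_comm (k : ℝ) μ, rpow_mul (by linarith), hqμ, rpow_natCast]
  rw [norm_norm, norm_div, norm_pow, Real.norm_eq_abs, Real.norm_eq_abs, abs_of_pos hΓ,
    div_le_iff₀ hΓ]
  calc |B| ^ k = q ^ (-a) * (|B| / (|B| + 1)) ^ k * q ^ (k * μ + a) := by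
        rw [hsplit, rpow_neg (by linarith), div_pow]
        field_simp
    _ ≤ q ^ (-a) * (|B| / (|B| + 1)) ^ k * (K * Gamma (k * μ + a)) := by
        gcongr
        exact hK _ hk
    _ = _ := by ring

theorem summable_norm_pow_div_Gamma_mul_Gamma {μ : ℝ} (hμ : 0 < μ) (B a b : ℝ) :
    Summable fun k : ℕ => ‖B ^ k / (Gamma (k * μ + a) * Gamma (k * μ + b))‖ := by
  refine (summable_norm_pow_div_Gamma hμ B a).of_norm_bounded_eventually_nat ?_
  filter_upwards [(tendsto_natCast_mul_add_atTop hμ b).eventually_ge_atTop 2] with k hk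
  have hΓ := one_le_Gamma hk
  rw [norm_norm, ← div_div, norm_div, Real.norm_of_nonneg (by linarith : 0 ≤ Gamma (k * μ + b))]
  exact div_le_self (norm_nonneg _) hΓ

theorem rpow_le_rpow_add_rpow {ε x M : ℝ} (hε : 0 < ε) (hεx : ε ≤ x) (hxM : x ≤ M) (e : ℝ) :
    x ^ e ≤ ε ^ e + M ^ e := by
  rcases le_total 0 e with he | he
  · linarith [rpow_le_rpow (by linarith) hxM he, rpow_nonneg hε.le e]
  · linarith [rpow_le_rpow_of_nonpos hε hεx he, rpow_nonneg (hε.trans_le (hεx.trans hxM)).le e]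

section GammaSeries

variable (μ C : ℝ)

noncomputable def gammaSeriesTerm (a b : ℝ) (k : ℕ) (x : ℝ) : ℝ :=
  C ^ k * x ^ (k * μ + a - 1) / (Gamma (k * μ + a) * Gamma (k * μ + b))

noncomputable def gammaSeries (a b x : ℝ) : ℝ :=
  ∑' k, gammaSeriesTerm μ C a b k x

variable {μ C}

theorem gammaSeriesTerm_eq {x : ℝ} (hx : 0 < x) (a b : ℝ) (k : ℕ) :
    gammaSeriesTerm μ C a b k x =
      x ^ (a - 1) * ((C * x ^ μ) ^ k / (Gamma (k * μ + a) * Gamma (k * μ + b))) := by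
  rw [gammaSeriesTerm, mul_pow, ← rpow_natCast (x ^ μ), ← rpow_mul hx.le,
    show k * μ + a - 1 = μ * k + (a - 1) by ring, rpow_add hx]
  ring

theorem norm_gammaSeriesTerm_le (hμ : 0 ≤ μ) {ε x M : ℝ} (hε : 0 < ε) (hεx : ε ≤ x)
    (hxM : x ≤ M) (a b : ℝ) (k : ℕ) :
    ‖gammaSeriesTerm μ C a b k x‖ ≤
      (ε ^ (a - 1) + M ^ (a - 1)) *
        ‖(C * M ^ μ) ^ k / (Gamma (k * μ + a) * Gamma (k * μ + b))‖ := by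
  have hx : 0 < x := hε.trans_le hεx
  rw [gammaSeriesTerm_eq hx, norm_mul, Real.norm_of_nonneg (rpow_nonneg hx.le _)]
  refine mul_le_mul (rpow_le_rpow_add_rpow hε hεx hxM _) ?_ (norm_nonneg _)
    (add_nonneg (rpow_nonneg hε.le _) (rpow_nonneg (hx.le.trans hxM) _))
  rw [norm_div, norm_div, norm_pow, norm_pow, norm_mul, norm_mul, norm_mul,
      Real.norm_of_nonneg (rpow_nonneg hx.le _),
      Real.norm_of_nonneg (rpow_nonneg (hx.le.trans hxM) _)]
  gcongr

theorem summable_gammaSeriesTerm (hμ : 0 < μ) {x : ℝ} (hx : 0 < x) (a b : ℝ) :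
    Summable fun k => gammaSeriesTerm μ C a b k x :=
  .of_norm_bounded ((summable_norm_pow_div_Gamma_mul_Gamma hμ _ a b).mul_left _)
    (norm_gammaSeriesTerm_le hμ.le hx le_rfl le_rfl a b)

theorem hasDerivAt_gammaSeriesTerm {x : ℝ} (hx : 0 < x) (a b : ℝ) (k : ℕ) :
    HasDerivAt (gammaSeriesTerm μ C a b k) (gammaSeriesTerm μ C (a - 1) b k x) x := by
  have h := ((hasDerivAt_rpow_const (p := k * μ + a - 1) (Or.inl hx.ne')).const_mul
    (C ^ k)).div_const (Gamma (k * μ + a) * Gamma (k * μ + b))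
  refine h.congr_deriv ?_
  rw [gammaSeriesTerm, show k * μ + (a - 1) = k * μ + a - 1 by ring]
  simp only [div_eq_mul_inv, mul_inv]
  rw [inv_Gamma_eq_self_mul_inv_Gamma_add_one (k * μ + a - 1), sub_add_cancel]
  ring

theorem hasDerivAt_gammaSeries (hμ : 0 < μ) {x : ℝ} (hx : 0 < x) (a b : ℝ) :
    HasDerivAt (gammaSeries μ C a b) (gammaSeries μ C (a - 1) b x) x :=
  hasDerivAt_tsum_of_isPreconnected
    ((summable_norm_pow_div_Gamma_mul_Gamma hμ _ _ _).mul_left _) isOpen_Ioo isPreconnected_Ioo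
    (fun k y hy => hasDerivAt_gammaSeriesTerm ((half_pos hx).trans hy.1) a b k)
    (fun k y hy => norm_gammaSeriesTerm_le hμ.le (half_pos hx) hy.1.le hy.2.le (a - 1) b k)
    (y₀ := x) ⟨by linarith, by linarith⟩ (summable_gammaSeriesTerm hμ hx a b)
    (⟨by linarith, by linarith⟩ : x ∈ Set.Ioo (x / 2) (2 * x))

theorem gammaSeriesTerm_recurrence {x : ℝ} (hx : 0 < x) (a b : ℝ) (k : ℕ) :
    x * gammaSeriesTerm μ C (a - 1) b k x + (b - a) * gammaSeriesTerm μ C a b k x =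
      gammaSeriesTerm μ C a (b - 1) k x := by
  simp only [gammaSeriesTerm, div_eq_mul_inv, mul_inv]
  rw [show k * μ + (a - 1) - 1 = k * μ + a - 1 - 1 by ring, rpow_sub_one hx.ne',
    show k * μ + (a - 1) = k * μ + a - 1 by ring, show k * μ + (b - 1) = k * μ + b - 1 by ring,
    inv_Gamma_eq_self_mul_inv_Gamma_add_one (k * μ + a - 1),
    inv_Gamma_eq_self_mul_inv_Gamma_add_one (k * μ + b - 1), sub_add_cancel, sub_add_cancel]
  field_simp
  ring

theorem gammaSeries_recurrence (hμ : 0 < μ) {x : ℝ} (hx : 0 < x) (a b : ℝ) :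
    x * gammaSeries μ C (a - 1) b x + (b - a) * gammaSeries μ C a b x =
      gammaSeries μ C a (b - 1) x := by
  rw [gammaSeries, gammaSeries, gammaSeries, ← tsum_mul_left, ← tsum_mul_left,
    ← ((summable_gammaSeriesTerm hμ hx _ _).mul_left x).tsum_add
      ((summable_gammaSeriesTerm hμ hx _ _).mul_left _)]
  exact tsum_congr (gammaSeriesTerm_recurrence hx a b)

theorem gammaSeries_eq_add_mul_shift (hμ : 0 < μ) {x : ℝ} (hx : 0 < x) (a b : ℝ) :
    gammaSeries μ C a b x =
      x ^ (a - 1) / (Gamma a * Gamma b) + C * gammaSeries μ C (a + μ) (b + μ) x := by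
  rw [gammaSeries, (summable_gammaSeriesTerm hμ hx a b).tsum_eq_zero_add, gammaSeries,
    ← tsum_mul_left]
  congr 1
  · simp [gammaSeriesTerm]
  · refine tsum_congr fun k => ?_
    rw [gammaSeriesTerm, gammaSeriesTerm, Nat.cast_succ, show ((k : ℝ) + 1) * μ = k * μ + μ by ring,
      add_assoc, add_assoc, add_comm μ a, add_comm μ b, pow_succ]
    ring

theorem gammaSeries_neg_eq_add_sq_mul (hμ : 0 < μ) {x : ℝ} (hx : 0 < x) (b : ℝ) :
    gammaSeries μ C (-μ) (b - μ) x =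
      x ^ (-μ - 1) / (Gamma (-μ) * Gamma (b - μ)) + C ^ 2 * gammaSeries μ C μ (μ + b) x := by
  rw [gammaSeries_eq_add_mul_shift hμ hx, neg_add_cancel, sub_add_cancel,
    gammaSeries_eq_add_mul_shift hμ hx 0, Gamma_zero, zero_mul, div_zero, zero_add, zero_add,
    add_comm b μ]
  ring

end GammaSeries

theorem iteratedDeriv_two_comp_quadratic {g g' : ℝ → ℝ} {g'' α β s : ℝ}
    (hg : ∀ᶠ x in 𝓝 (α * s ^ 2 + β), HasDerivAt g (g' x) x)
    (hg' : HasDerivAt g' g'' (α * s ^ 2 + β)) :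
    iteratedDeriv 2 (fun s => g (α * s ^ 2 + β)) s =
      g'' * (2 * α * s) ^ 2 + g' (α * s ^ 2 + β) * (2 * α) := by
  have hq : ∀ r : ℝ, HasDerivAt (fun s => α * s ^ 2 + β) (2 * α * r) r := fun r => by
    simpa [mul_comm, mul_left_comm] using ((hasDerivAt_pow 2 r).const_mul α).add_const β
  have hderiv : deriv (fun s => g (α * s ^ 2 + β)) =ᶠ[𝓝 s]
      fun r => g' (α * r ^ 2 + β) * (2 * α * r) := by
    filter_upwards [(hq s).continuousAt.tendsto.eventually hg] with r hr
    exact (hr.comp r (hq r)).deriv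
  have hlin : HasDerivAt (fun r : ℝ => 2 * α * r) (2 * α) s := by
    simpa using (hasDerivAt_id s).const_mul (2 * α)
  have hderiv' : HasDerivAt (fun r => g' (α * r ^ 2 + β) * (2 * α * r))
      (g'' * (2 * α * s) * (2 * α * s) + g' (α * s ^ 2 + β) * (2 * α)) s :=
    (hg'.comp s (hq s)).mul hlin
  rw [iteratedDeriv_succ, iteratedDeriv_one, hderiv.deriv_eq, hderiv'.deriv]
  ring

theorem EuclideanSpace.norm_sq_update {ι : Type*} [Fintype ι] [DecidableEq ι]
    (y : EuclideanSpace ℝ ι) (j : ι) (s : ℝ) :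
    ‖WithLp.toLp 2 (Function.update y j s)‖ ^ 2 = ‖y‖ ^ 2 - y j ^ 2 + s ^ 2 := by
  simp only [EuclideanSpace.real_norm_sq_eq]
  rw [← Finset.add_sum_erase _ _ (Finset.mem_univ j),
    ← Finset.add_sum_erase _ _ (Finset.mem_univ j), Function.update_self, Finset.sum_congr rfl fun i hi => by
      rw [Function.update_of_ne (Finset.ne_of_mem_erase hi)]]
  ring

section WaveOperator

variable {d : ℕ} {c : ℝ}

theorem dAlembert_congr {u v : EuclideanSpace ℝ (Fin d) × ℝ → ℝ}
    {p : EuclideanSpace ℝ (Fin d) × ℝ} (h : u =ᶠ[𝓝 p] v) :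
    dAlembert d c u p = dAlembert d c v p := by
  have slice : ∀ {γ : ℝ → EuclideanSpace ℝ (Fin d) × ℝ} {s : ℝ}, Continuous γ → γ s = p →
      iteratedDeriv 2 (fun r => u (γ r)) s = iteratedDeriv 2 (fun r => v (γ r)) s :=
    fun hγ hs => Filter.EventuallyEq.iteratedDeriv_eq 2 (h.comp_tendsto (hs ▸ hγ.tendsto _))
  unfold dAlembert
  congr 1
  · exact slice (by fun_prop) rfl
  · refine congrArg _ (Finset.sum_congr rfl fun j _ => slice ?_ (by simp))
    fun_prop

theorem dAlembert_comp_spacetimeInterval {g g' : ℝ → ℝ} {g'' : ℝ} {p : EuclideanSpace ℝ (Fin d) × ℝ}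
    (hg : ∀ᶠ x in 𝓝 (c ^ 2 * p.2 ^ 2 - ‖p.1‖ ^ 2), HasDerivAt g (g' x) x)
    (hg' : HasDerivAt g' g'' (c ^ 2 * p.2 ^ 2 - ‖p.1‖ ^ 2)) :
    dAlembert d c (fun q => g (c ^ 2 * q.2 ^ 2 - ‖q.1‖ ^ 2)) p =
      4 * c ^ 2 * ((c ^ 2 * p.2 ^ 2 - ‖p.1‖ ^ 2) * g'' +
        (d + 1) / 2 * g' (c ^ 2 * p.2 ^ 2 - ‖p.1‖ ^ 2)) := by
  obtain ⟨y, t⟩ := p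
  set X := c ^ 2 * t ^ 2 - ‖y‖ ^ 2
  have htime : iteratedDeriv 2 (fun s => g (c ^ 2 * s ^ 2 - ‖y‖ ^ 2)) t =
      g'' * (2 * c ^ 2 * t) ^ 2 + g' X * (2 * c ^ 2) := by
    simp only [sub_eq_add_neg] at hg hg' ⊢
    exact iteratedDeriv_two_comp_quadratic hg hg'
  have hspace : ∀ j, iteratedDeriv 2
      (fun s => g (c ^ 2 * t ^ 2 - ‖WithLp.toLp 2 (Function.update y j s)‖ ^ 2)) (y j) =
        g'' * (2 * y j) ^ 2 - 2 * g' X := by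
    intro j
    have hX : -1 * y j ^ 2 + (X + y j ^ 2) = X := by ring
    have hslice : (fun s => g (c ^ 2 * t ^ 2 - ‖WithLp.toLp 2 (Function.update y j s)‖ ^ 2)) =
        fun s => g (-1 * s ^ 2 + (X + y j ^ 2)) := by
      funext s
      rw [EuclideanSpace.norm_sq_update]
      congr 1
      simp only [X]
      ring
    rw [hslice, iteratedDeriv_two_comp_quadratic (by rwa [hX]) (by rwa [hX]), hX]
    ring
  simp only [dAlembert, htime, hspace, Finset.sum_sub_distrib, Finset.sum_const, Finset.card_univ,
    Fintype.card_fin, nsmul_eq_mul, mul_pow, ← Finset.mul_sum, ← EuclideanSpace.real_norm_sq_eq]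
  ring

end WaveOperator

section Iteration

variable {d : ℕ} {c μ C : ℝ}

theorem dAlembert_mul_gammaSeries_comp (hμ : 0 < μ) (K : ℝ) {a b : ℝ} (hab : b - a = (d - 1) / 2)
    {p : EuclideanSpace ℝ (Fin d) × ℝ} (hp : 0 < c ^ 2 * p.2 ^ 2 - ‖p.1‖ ^ 2) :
    dAlembert d c (fun q => K * gammaSeries μ C a b (c ^ 2 * q.2 ^ 2 - ‖q.1‖ ^ 2)) p =
      4 * c ^ 2 * K * gammaSeries μ C (a - 1) (b - 1) (c ^ 2 * p.2 ^ 2 - ‖p.1‖ ^ 2) := by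
  have hg : ∀ᶠ x in 𝓝 (c ^ 2 * p.2 ^ 2 - ‖p.1‖ ^ 2),
      HasDerivAt (fun x => K * gammaSeries μ C a b x) (K * gammaSeries μ C (a - 1) b x) x := by
    filter_upwards [lt_mem_nhds hp] with x hx
    exact (hasDerivAt_gammaSeries hμ hx a b).const_mul K
  rw [dAlembert_comp_spacetimeInterval hg ((hasDerivAt_gammaSeries hμ hp (a - 1) b).const_mul K),
    ← gammaSeries_recurrence hμ hp (a - 1) b, show b - (a - 1) = (d + 1) / 2 by linarith]
  ring

theorem iterate_dAlembert_mul_gammaSeries_comp (hμ : 0 < μ) {a b : ℝ}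
    (hab : b - a = (d - 1) / 2) (n : ℕ) (K : ℝ) {p : EuclideanSpace ℝ (Fin d) × ℝ}
    (hp : 0 < c ^ 2 * p.2 ^ 2 - ‖p.1‖ ^ 2) :
    (dAlembert d c)^[n] (fun q => K * gammaSeries μ C a b (c ^ 2 * q.2 ^ 2 - ‖q.1‖ ^ 2)) p =
      (4 * c ^ 2) ^ n * K * gammaSeries μ C (a - n) (b - n) (c ^ 2 * p.2 ^ 2 - ‖p.1‖ ^ 2) := by
  induction n generalizing p with
  | zero => simp
  | succ n ih =>
    have hloc : (dAlembert d c)^[n]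
        (fun q => K * gammaSeries μ C a b (c ^ 2 * q.2 ^ 2 - ‖q.1‖ ^ 2)) =ᶠ[𝓝 p]
          fun q => (4 * c ^ 2) ^ n * K *
            gammaSeries μ C (a - n) (b - n) (c ^ 2 * q.2 ^ 2 - ‖q.1‖ ^ 2) := by
      have hopen : IsOpen {q : EuclideanSpace ℝ (Fin d) × ℝ | 0 < c ^ 2 * q.2 ^ 2 - ‖q.1‖ ^ 2} :=
        isOpen_lt continuous_const (by fun_prop)
      filter_upwards [hopen.mem_nhds hp] with q hq
      exact ih hq
    rw [Function.iterate_succ_apply', dAlembert_congr hloc,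
      dAlembert_mul_gammaSeries_comp hμ _ (by linarith) hp, Nat.cast_succ, ← sub_sub, ← sub_sub,
      pow_succ]
    ring

end Iteration

theorem tsum_eq_mul_gammaSeries (d : ℕ) (lam c x : ℝ) :
    ∑' k : ℕ, (lam / (2 * c)) ^ ((k + 1) * (d - 2)) *
        x ^ (((((k : ℝ) + 1) * ((d : ℝ) - 2)) - 2) / 2) /
        (Gamma (((k : ℝ) + 1) * ((d : ℝ) / 2 - 1)) *
          Gamma (((d : ℝ) - 1) / 2 + ((d : ℝ) / 2 - 1) * ((k : ℝ) + 1))) =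
      (lam / (2 * c)) ^ (d - 2) * gammaSeries (d / 2 - 1) ((lam / (2 * c)) ^ (d - 2)) (d / 2 - 1)
        (d / 2 - 1 + (d - 1) / 2) x := by
  rw [gammaSeries, ← tsum_mul_left]
  refine tsum_congr fun k => ?_
  rw [gammaSeriesTerm, mul_comm (k + 1), pow_mul, pow_succ',
    show (((k : ℝ) + 1) * ((d : ℝ) - 2) - 2) / 2 = k * (d / 2 - 1) + (d / 2 - 1) - 1 by ring,
    show ((k : ℝ) + 1) * ((d : ℝ) / 2 - 1) = k * (d / 2 - 1) + (d / 2 - 1) by ring,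
    show ((d : ℝ) - 1) / 2 + ((d : ℝ) / 2 - 1) * ((k : ℝ) + 1) =
      k * (d / 2 - 1) + (d / 2 - 1 + (d - 1) / 2) by ring]
  ring

theorem statement1_general (d : ℕ) (hd : 3 ≤ d) (lam c : ℝ)
    (f : EuclideanSpace ℝ (Fin d) × ℝ → ℝ)
    (hf : ∀ (y : EuclideanSpace ℝ (Fin d)) (t : ℝ), f (y, t) =
      ∑' k : ℕ,
        (lam / (2 * c)) ^ ((k + 1) * (d - 2)) *
          (c ^ 2 * t ^ 2 - ‖y‖ ^ 2) ^ (((((k : ℝ) + 1) * ((d : ℝ) - 2)) - 2) / 2) /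
          (Real.Gamma (((k : ℝ) + 1) * ((d : ℝ) / 2 - 1)) *
            Real.Gamma (((d : ℝ) - 1) / 2 + ((d : ℝ) / 2 - 1) * ((k : ℝ) + 1)))) :
    ∀ (y : EuclideanSpace ℝ (Fin d)) (t : ℝ), 0 < t → ‖y‖ < c * t →
      (dAlembert d c)^[d - 2] f (y, t) =
        lam ^ (2 * (d - 2)) * f (y, t) +
          (2 * lam * c) ^ (d - 2) *
            (c ^ 2 * t ^ 2 - ‖y‖ ^ 2) ^ (-(d : ℝ) / 2) /
            (Real.sqrt π * Real.Gamma (1 - (d : ℝ) / 2)) := by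
  intro y t _ hyt
  set μ : ℝ := d / 2 - 1 with hμ_def
  set C := (lam / (2 * c)) ^ (d - 2) with hC_def
  have hμ : 0 < μ := by linarith [show (3 : ℝ) ≤ d from mod_cast hd]
  have hc : c ≠ 0 := by rintro rfl; linarith [norm_nonneg y]
  have hX : 0 < c ^ 2 * t ^ 2 - ‖y‖ ^ 2 := by nlinarith [norm_nonneg y]
  have hf' : f = fun p => C * gammaSeries μ C μ (μ + (d - 1) / 2) (c ^ 2 * p.2 ^ 2 - ‖p.1‖ ^ 2) :=
    funext fun ⟨y, t⟩ => (hf y t).trans (tsum_eq_mul_gammaSeries d lam c _)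
  have hn : ((d - 2 : ℕ) : ℝ) = 2 * μ := by rw [Nat.cast_sub (by omega), hμ_def]; push_cast; ring
  rw [hf', iterate_dAlembert_mul_gammaSeries_comp (p := (y, t)) hμ (by ring) (d - 2) C hX, hn]
  dsimp only
  rw [show μ - 2 * μ = -μ by ring, show μ + (d - 1) / 2 - 2 * μ = (d - 1) / 2 - μ by ring,
    gammaSeries_neg_eq_add_sq_mul hμ hX, show -μ - 1 = -(d : ℝ) / 2 by rw [hμ_def]; ring,
    show -μ = 1 - (d : ℝ) / 2 by rw [hμ_def]; ring,
    show ((d : ℝ) - 1) / 2 - μ = 1 / 2 by rw [hμ_def]; ring, Gamma_one_half_eq]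
  have hC₁ : (4 * c ^ 2) ^ (d - 2) * C = (2 * lam * c) ^ (d - 2) := by
    rw [hC_def, ← mul_pow]; congr 1; field_simp; ring
  have hC₂ : (4 * c ^ 2) ^ (d - 2) * C ^ 2 = lam ^ (2 * (d - 2)) := by
    rw [hC_def, ← pow_mul, mul_comm (d - 2) 2, pow_mul, pow_mul, ← mul_pow]
    congr 1; field_simp; ring
  linear_combination C * gammaSeries μ C μ (μ + (d - 1) / 2) (c ^ 2 * t ^ 2 - ‖y‖ ^ 2) * hC₂ +
    (c ^ 2 * t ^ 2 - ‖y‖ ^ 2) ^ (-(d : ℝ) / 2) / (Gamma (1 - d / 2) * √π) * hC₁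

/-- for `d ≥ 3`, `λ, c > 0`, the function
`f(y,t) = Σ_{k=1}^∞ (λ/(2c))^{k(d-2)} (c²t² - ‖y‖²)^{(k(d-2)-2)/2}
            / (Γ(k(d/2-1)) Γ((d-1)/2 + (d/2-1)k))`
satisfies the non-homogeneous iterated Klein-Gordon equation
`W^(d-2) f = λ^{2(d-2)} f + (2λc)^{d-2} (c²t² - ‖y‖²)^{-d/2} / (√π Γ(1 - d/2))`
on the open cone `{(y,t) : ‖y‖ < ct, t > 0}`.  (Mathlib's `Real.Gamma` vanishes at
nonpositive integers, so `1/Γ(1-d/2)` is `0` for even `d ≥ 4`, as required.) -/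
theorem statement1 (d : ℕ) (hd : 3 ≤ d) (lam c : ℝ) (hlam : 0 < lam) (hc : 0 < c)
    (f : EuclideanSpace ℝ (Fin d) × ℝ → ℝ)
    (hf : ∀ (y : EuclideanSpace ℝ (Fin d)) (t : ℝ), f (y, t) =
      ∑' k : ℕ,
        (lam / (2 * c)) ^ ((k + 1) * (d - 2)) *
          (c ^ 2 * t ^ 2 - ‖y‖ ^ 2) ^ (((((k : ℝ) + 1) * ((d : ℝ) - 2)) - 2) / 2) /
          (Real.Gamma (((k : ℝ) + 1) * ((d : ℝ) / 2 - 1)) *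
            Real.Gamma (((d : ℝ) - 1) / 2 + ((d : ℝ) / 2 - 1) * ((k : ℝ) + 1)))) :
    ∀ (y : EuclideanSpace ℝ (Fin d)) (t : ℝ), 0 < t → ‖y‖ < c * t →
      (dAlembert d c)^[d - 2] f (y, t) =
        lam ^ (2 * (d - 2)) * f (y, t) +
          (2 * lam * c) ^ (d - 2) *
            (c ^ 2 * t ^ 2 - ‖y‖ ^ 2) ^ (-(d : ℝ) / 2) /
            (Real.sqrt π * Real.Gamma (1 - (d : ℝ) / 2)) :=
  statement1_general d hd lam c f hf
end

section
/- Let λ, c > 0. Define u : ℝ³ × (0,∞) → ℝ on the open cone {(y,t) : ‖y‖ < ct, t > 0} by u(y,t) = (λ/(2c)) · (1/(π(e^{λt} − 1))) · Σ_{k=0}^∞ (λ/(2c))^{k+1} (c²t² − ‖y‖²)^{(k−1)/2} / (Γ((k+1)/2) · Γ((k+3)/2)). Then u satisfies the non-homogeneous telegraph equation with time-varying coefficients ∂²u/∂t² + c₁(t) ∂u/∂t − c² Δu = c₂(t) u + c₃(y,t) on the open cone, where Δ = Σ_{j=1}^3 ∂²/∂y_j², c₁(t) = 2λ e^{λt}/(e^{λt}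 − 1), c₂(t) = −λ²/(e^{λt} − 1), and c₃(y,t) = −λ² (c²t² − ‖y‖²)^{−3/2} / (2π²(e^{λt} − 1)). -/
/-!
Write `u = θ(t) · G(c²t² - ‖y‖²)` with `θ(t) = (e^{λt} - 1)⁻¹`, `G = (a/π) g`, `a = λ/(2c)`
and `g(x) = Σ a^{k+1} x^{(k-1)/2} / (Γ((k+1)/2) Γ((k+3)/2))`. Term-by-term differentiation and
the recurrence `Γ((k+3)/2) Γ((k+5)/2) = ((k+1)(k+3)/4) Γ((k+1)/2) Γ((k+3)/2)` show that `g`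
solves `x g'' + 2 g' = a² g - (a/2π) x^{-3/2}`, the source coming from the term `k = 0`.
For a radial profile in `ℝ³`, `u_tt - c² Δu = θ'' G + 4c²t θ' G' + 4c² θ (w G'' + 2 G')` with
`w = c²t² - ‖y‖²`. Finally `θ` solves the Riccati equation `θ' = -λ(θ + θ²)`, so `c₁ θ = -2θ'`
kills the `G'` terms and `θ'' + c₁ θ' + λ² θ = -λ² θ² = c₂ θ`.
-/

open Real Filter Topology
open scoped Nat

noncomputable def halfPowerSeries (b : ℕ → ℝ) (e x : ℝ) : ℝ :=
  ∑' k : ℕ, b k * x ^ ((k : ℝ) / 2 + e)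

lemma rpow_half_natCast_add {z : ℝ} (hz : 0 < z) (k : ℕ) (e : ℝ) :
    z ^ ((k : ℝ) / 2 + e) = √z ^ k * z ^ e := by
  rw [rpow_add hz, sqrt_eq_rpow, ← rpow_natCast, ← rpow_mul hz.le]
  ring_nf

lemma rpow_le_rpow_add_rpow_s2 {lo z hi : ℝ} (hlo : 0 < lo) (hz : lo ≤ z) (hzhi : z ≤ hi)
    (p : ℝ) : z ^ p ≤ lo ^ p + hi ^ p := by
  rcases le_total 0 p with hp | hp
  · linarith [rpow_le_rpow (hlo.le.trans hz) hzhi hp, rpow_nonneg hlo.le p]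
  · linarith [rpow_le_rpow_of_nonpos hlo hz hp, rpow_nonneg (hlo.le.trans (hz.trans hzhi)) p]

section HalfPowerSeries

variable {b : ℕ → ℝ}

lemma summable_abs_linear_mul (hb : ∀ r, 0 ≤ r → Summable fun k => |b k| * r ^ k)
    (e r : ℝ) (hr : 0 ≤ r) :
    Summable fun k : ℕ => |((k : ℝ) / 2 + e) * b k| * r ^ k := by
  refine .of_nonneg_of_le (fun k => by positivity) (fun k => ?_)
    ((hb (2 * r) (by positivity)).mul_left (1 + |e|))
  have hk : (k : ℝ) ≤ 2 ^ k := by exact_mod_cast Nat.lt_two_pow_self.le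
  have h1 : (1 : ℝ) ≤ 2 ^ k := one_le_pow₀ (by norm_num)
  have hlin : |(k : ℝ) / 2 + e| ≤ (1 + |e|) * 2 ^ k := by
    refine (abs_add_le _ _).trans ?_
    rw [abs_of_nonneg (by positivity)]
    nlinarith [abs_nonneg e]
  rw [abs_mul, mul_pow]
  calc |(k : ℝ) / 2 + e| * |b k| * r ^ k ≤ (1 + |e|) * 2 ^ k * |b k| * r ^ k := by gcongr
    _ = _ := by ring

lemma summable_halfPowerSeries (hb : ∀ r, 0 ≤ r → Summable fun k => |b k| * r ^ k)
    (e : ℝ) {x : ℝ} (hx : 0 < x) :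
    Summable fun k => b k * x ^ ((k : ℝ) / 2 + e) := by
  refine .of_norm_bounded ((hb √x (sqrt_nonneg x)).mul_right (x ^ e)) fun k => ?_
  rw [rpow_half_natCast_add hx, norm_mul, norm_mul, Real.norm_eq_abs,
    norm_of_nonneg (by positivity), norm_of_nonneg (by positivity), mul_assoc]

theorem hasDerivAt_halfPowerSeries (hb : ∀ r, 0 ≤ r → Summable fun k => |b k| * r ^ k)
    (e : ℝ) {x : ℝ} (hx : 0 < x) :
    HasDerivAt (halfPowerSeries b e)
      (halfPowerSeries (fun k : ℕ => ((k : ℝ) / 2 + e) * b k) (e - 1) x) x := by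
  have hx2 : 0 < x / 2 := by positivity
  have hxt : x ∈ Set.Ioo (x / 2) (2 * x) := ⟨by linarith, by linarith⟩
  refine hasDerivAt_tsum_of_isPreconnected (t := Set.Ioo (x / 2) (2 * x))
    (g := fun (k : ℕ) (z : ℝ) => b k * z ^ ((k : ℝ) / 2 + e))
    (g' := fun (k : ℕ) (z : ℝ) => ((k : ℝ) / 2 + e) * b k * z ^ ((k : ℝ) / 2 + (e - 1)))
    (u := fun k : ℕ => |((k : ℝ) / 2 + e) * b k| * √(2 * x) ^ k
      * ((x / 2) ^ (e - 1) + (2 * x) ^ (e - 1)))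
    ((summable_abs_linear_mul hb e _ (sqrt_nonneg _)).mul_right _) isOpen_Ioo isPreconnected_Ioo
    (fun k z hz => ?_) (fun k z hz => ?_) hxt (summable_halfPowerSeries hb e hx) hxt
  · have hz0 : 0 < z := hx2.trans hz.1
    refine ((hasDerivAt_rpow_const (Or.inl hz0.ne')).const_mul (b k)).congr_deriv ?_
    rw [← add_sub_assoc]
    ring
  · have hz0 : 0 < z := hx2.trans hz.1
    rw [rpow_half_natCast_add hz0, norm_mul, Real.norm_eq_abs,
      norm_of_nonneg (by positivity), mul_assoc]
    gcongr
    · exact hz.2.le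
    · exact rpow_le_rpow_add_rpow_s2 hx2 hz.1.le hz.2.le _

end HalfPowerSeries

lemma mul_halfPowerSeries (b : ℕ → ℝ) (e : ℝ) {x : ℝ} (hx : 0 < x) :
    x * halfPowerSeries b e x = halfPowerSeries b (e + 1) x := by
  rw [halfPowerSeries, halfPowerSeries, ← tsum_mul_left]
  refine tsum_congr fun k => ?_
  rw [← add_assoc, rpow_add_one hx.ne']
  ring

lemma const_mul_halfPowerSeries (r : ℝ) (b : ℕ → ℝ) (e x : ℝ) :
    r * halfPowerSeries b e x = halfPowerSeries (fun k => r * b k) e x := by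
  rw [halfPowerSeries, halfPowerSeries, ← tsum_mul_left]
  exact tsum_congr fun k => by ring

lemma halfPowerSeries_add {b b' : ℕ → ℝ} {e x : ℝ}
    (hb : Summable fun k => b k * x ^ ((k : ℝ) / 2 + e))
    (hb' : Summable fun k => b' k * x ^ ((k : ℝ) / 2 + e)) :
    halfPowerSeries b e x + halfPowerSeries b' e x
      = halfPowerSeries (fun k => b k + b' k) e x := by
  rw [halfPowerSeries, halfPowerSeries, halfPowerSeries, ← hb.tsum_add hb']
  exact tsum_congr fun k => by ring

lemma halfPowerSeries_eq_add_shift {b : ℕ → ℝ} {e x : ℝ}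
    (hb : Summable fun k => b k * x ^ ((k : ℝ) / 2 + e)) :
    halfPowerSeries b e x
      = b 0 * x ^ e + b 1 * x ^ (1 / 2 + e) + halfPowerSeries (fun k => b (k + 2)) (e + 1) x := by
  rw [halfPowerSeries, hb.tsum_eq_zero_add, ((summable_nat_add_iff 1).2 hb).tsum_eq_zero_add,
    halfPowerSeries]
  push_cast
  simp only [zero_div, zero_add, add_assoc]
  congr 2
  refine tsum_congr fun k => ?_
  congr 2
  ring

lemma Gamma_mul_Gamma_add_two {x : ℝ} (h1 : x + 1 ≠ 0) (h3 : x + 3 ≠ 0) :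
    Gamma ((x + 2 + 1) / 2) * Gamma ((x + 2 + 3) / 2)
      = (x + 1) * (x + 3) / 4 * (Gamma ((x + 1) / 2) * Gamma ((x + 3) / 2)) := by
  rw [show (x + 2 + 1) / 2 = (x + 1) / 2 + 1 by ring,
    show (x + 2 + 3) / 2 = (x + 3) / 2 + 1 by ring,
    Gamma_add_one (by positivity), Gamma_add_one (by positivity)]
  ring

lemma Gamma_one_half_mul_Gamma_three_halves : Gamma (1 / 2) * Gamma (3 / 2) = π / 2 := by
  rw [show (3 : ℝ) / 2 = 1 / 2 + 1 by norm_num, Gamma_add_one (by norm_num), Gamma_one_half_eq,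
    mul_left_comm, mul_self_sqrt pi_pos.le]
  ring

lemma factorial_div_two_pow_le_Gamma_mul_Gamma (k : ℕ) :
    (k ! : ℝ) / 2 ^ k ≤ Gamma (((k : ℝ) + 1) / 2) * Gamma (((k : ℝ) + 3) / 2) := by
  induction k using Nat.strong_induction_on with
  | _ k ih =>
    match k with
    | 0 =>
      norm_num [Gamma_one_half_mul_Gamma_three_halves]
      linarith [pi_gt_three]
    | 1 => norm_num [show (2 : ℝ) = 1 + 1 by norm_num, Gamma_add_one]
    | k + 2 =>
      have hk : (0 : ℝ) ≤ k := k.cast_nonneg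
      push_cast
      rw [Gamma_mul_Gamma_add_two (by positivity) (by positivity)]
      calc ((k + 2)! : ℝ) / 2 ^ (k + 2) = (k + 1) * (k + 2) / 4 * (k ! / 2 ^ k) := by
            push_cast [Nat.factorial_succ]; ring
        _ ≤ (k + 1) * (k + 3) / 4 * (Gamma ((k + 1) / 2) * Gamma ((k + 3) / 2)) := by
            gcongr ?_ * ?_
            · linarith
            · exact ih k (by omega)

noncomputable def flightCoeff (a : ℝ) (k : ℕ) : ℝ :=
  a ^ (k + 1) / (Gamma (((k : ℝ) + 1) / 2) * Gamma (((k : ℝ) + 3) / 2))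

lemma flightCoeff_zero (a : ℝ) : flightCoeff a 0 = 2 * a / π := by
  norm_num [flightCoeff, Gamma_one_half_mul_Gamma_three_halves]
  ring

lemma flightCoeff_add_two (a : ℝ) (k : ℕ) :
    ((k : ℝ) + 1) * ((k : ℝ) + 3) / 4 * flightCoeff a (k + 2) = a ^ 2 * flightCoeff a k := by
  have hk : (0 : ℝ) ≤ k := k.cast_nonneg
  have hΓ : 0 < Gamma (((k : ℝ) + 1) / 2) * Gamma (((k : ℝ) + 3) / 2) :=
    mul_pos (Gamma_pos_of_pos (by positivity)) (Gamma_pos_of_pos (by positivity))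
  rw [flightCoeff, flightCoeff]
  push_cast
  rw [Gamma_mul_Gamma_add_two (by positivity) (by positivity)]
  field_simp
  ring

lemma summable_flightCoeff (a : ℝ) (r : ℝ) (hr : 0 ≤ r) :
    Summable fun k => |flightCoeff a k| * r ^ k := by
  refine .of_nonneg_of_le (fun k => by positivity) (fun k => ?_)
    ((Real.summable_pow_div_factorial (2 * |a| * r)).mul_left |a|)
  have hΓ := factorial_div_two_pow_le_Gamma_mul_Gamma k
  have hf : (0 : ℝ) < k ! / 2 ^ k := by positivity
  rw [flightCoeff, abs_div, abs_of_pos (hf.trans_le hΓ), abs_pow]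
  calc |a| ^ (k + 1) / (Gamma (((k : ℝ) + 1) / 2) * Gamma (((k : ℝ) + 3) / 2)) * r ^ k
      ≤ |a| ^ (k + 1) / (k ! / 2 ^ k) * r ^ k := by gcongr
    _ = |a| * ((2 * |a| * r) ^ k / k !) := by field_simp; ring

def HasSecondDerivAt (f f' : ℝ → ℝ) (f'' x : ℝ) : Prop :=
  (∀ᶠ y in 𝓝 x, HasDerivAt f (f' y) y) ∧ HasDerivAt f' f'' x

namespace HasSecondDerivAt

variable {f f' g g' : ℝ → ℝ} {f'' g'' x : ℝ}

lemma deriv (h : HasSecondDerivAt f f' f'' x) : deriv f x = f' x :=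
  h.1.self_of_nhds.deriv

lemma iteratedDeriv_two (h : HasSecondDerivAt f f' f'' x) : iteratedDeriv 2 f x = f'' := by
  rw [iteratedDeriv_succ, iteratedDeriv_one,
    Filter.EventuallyEq.deriv_eq (h.1.mono fun y hy => hy.deriv), h.2.deriv]

lemma hasSecondDerivAt_deriv (h : HasSecondDerivAt f f' f'' x) :
    HasSecondDerivAt f (_root_.deriv f) (iteratedDeriv 2 f x) x :=
  ⟨h.1.mono fun _ hy => hy.differentiableAt.hasDerivAt, h.iteratedDeriv_two ▸
    h.2.congr_of_eventuallyEq (h.1.mono fun _ hy => hy.deriv)⟩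

lemma congr (h : HasSecondDerivAt f f' f'' x) (hg : ∀ y, f y = g y) (hg' : ∀ y, f' y = g' y)
    (hg'' : f'' = g'') : HasSecondDerivAt g g' g'' x := by
  obtain rfl := funext hg
  obtain rfl := funext hg'
  exact hg'' ▸ h

lemma const_mul (r : ℝ) (h : HasSecondDerivAt f f' f'' x) :
    HasSecondDerivAt (fun y => r * f y) (fun y => r * f' y) (r * f'') x :=
  ⟨h.1.mono fun _ hy => hy.const_mul r, h.2.const_mul r⟩

lemma mul (hf : HasSecondDerivAt f f' f'' x) (hg : HasSecondDerivAt g g' g'' x) :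
    HasSecondDerivAt (fun y => f y * g y) (fun y => f' y * g y + f y * g' y)
      (f'' * g x + 2 * (f' x * g' x) + f x * g'') x :=
  ⟨(hf.1.and hg.1).mono fun _ hy => hy.1.mul hy.2,
    ((hf.2.mul hg.1.self_of_nhds).add (hf.1.self_of_nhds.mul hg.2)).congr_deriv (by ring)⟩

lemma comp {q q' : ℝ → ℝ} {q'' : ℝ} (x : ℝ) (hf : HasSecondDerivAt f f' f'' (q x))
    (hq : HasSecondDerivAt q q' q'' x) :
    HasSecondDerivAt (fun y => f (q y)) (fun y => f' (q y) * q' y)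
      (f'' * q' x ^ 2 + f' (q x) * q'') x :=
  ⟨(hq.1.and (hq.1.self_of_nhds.continuousAt.tendsto.eventually hf.1)).mono
      fun y hy => hy.2.comp y hy.1,
    ((hf.2.comp x hq.1.self_of_nhds).mul hq.2).congr_deriv (by rw [Function.comp_apply]; ring)⟩

end HasSecondDerivAt

lemma hasSecondDerivAt_mul_sq_sub (α β x : ℝ) :
    HasSecondDerivAt (fun s => α * s ^ 2 - β) (fun s => 2 * α * s) (2 * α) x :=
  ⟨.of_forall fun s => (((hasDerivAt_pow 2 s).const_mul α).sub_const β).congr_deriv (by ring),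
    ((hasDerivAt_id' x).const_mul (2 * α)).congr_deriv (by ring)⟩

lemma hasSecondDerivAt_const_sub (β x : ℝ) :
    HasSecondDerivAt (fun s => β - s) (fun _ => -1) 0 x :=
  ⟨.of_forall fun s => (hasDerivAt_id' s).const_sub β, hasDerivAt_const x _⟩

lemma norm_sq_toLp_update {ι : Type*} [Fintype ι] [DecidableEq ι] (y : EuclideanSpace ℝ ι)
    (j : ι) (s : ℝ) :
    ‖WithLp.toLp 2 (Function.update y j s)‖ ^ 2 = s ^ 2 + (‖y‖ ^ 2 - y j ^ 2) := by
  rw [EuclideanSpace.real_norm_sq_eq, EuclideanSpace.real_norm_sq_eq,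
    ← Finset.add_sum_erase _ _ (Finset.mem_univ j),
    ← Finset.add_sum_erase _ _ (Finset.mem_univ j)]
  simp only [Function.update_self, add_sub_cancel_left]
  congr 1
  exact Finset.sum_congr rfl fun i hi => by rw [Function.update_of_ne (Finset.ne_of_mem_erase hi)]

theorem sum_iteratedDeriv_two_radial {ι : Type*} [Fintype ι] [DecidableEq ι] {F F' : ℝ → ℝ}
    {F'' : ℝ} (y : EuclideanSpace ℝ ι) (hF : HasSecondDerivAt F F' F'' (‖y‖ ^ 2)) :
    ∑ j, iteratedDeriv 2 (fun s => F (‖WithLp.toLp 2 (Function.update y j s)‖ ^ 2)) (y j)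
      = 2 * Fintype.card ι * F' (‖y‖ ^ 2) + 4 * ‖y‖ ^ 2 * F'' := by
  have hj : ∀ j,
      iteratedDeriv 2 (fun s => F (‖WithLp.toLp 2 (Function.update y j s)‖ ^ 2)) (y j)
      = 4 * y j ^ 2 * F'' + 2 * F' (‖y‖ ^ 2) := by
    intro j
    set q := fun s => ‖WithLp.toLp 2 (Function.update y j s)‖ ^ 2
    have hq : HasSecondDerivAt q (fun s => 2 * s) 2 (y j) :=
      (hasSecondDerivAt_mul_sq_sub 1 (y j ^ 2 - ‖y‖ ^ 2) (y j)).congr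
        (fun s => by simp only [q, norm_sq_toLp_update]; ring) (fun s => by ring) (by ring)
    have hy : q (y j) = ‖y‖ ^ 2 := by simp [q]
    have hF' : HasSecondDerivAt F F' F'' (q (y j)) := by rwa [hy]
    rw [(hF'.comp _ hq).iteratedDeriv_two, hy]
    ring
  rw [Finset.sum_congr rfl fun j _ => hj j, Finset.sum_add_distrib, ← Finset.sum_mul,
    ← Finset.mul_sum, ← EuclideanSpace.real_norm_sq_eq, Finset.sum_const, Finset.card_univ,
    nsmul_eq_mul]
  ring

theorem telegraph_mul_radial_eq {ι : Type*} [Fintype ι] [DecidableEq ι]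
    {θ θ' G G' : ℝ → ℝ} {θ'' G'' : ℝ} (c c₁ t : ℝ) (y : EuclideanSpace ℝ ι)
    (hθ : HasSecondDerivAt θ θ' θ'' t)
    (hG : HasSecondDerivAt G G' G'' (c ^ 2 * t ^ 2 - ‖y‖ ^ 2)) :
    iteratedDeriv 2 (fun s => θ s * G (c ^ 2 * s ^ 2 - ‖y‖ ^ 2)) t
      + c₁ * deriv (fun s => θ s * G (c ^ 2 * s ^ 2 - ‖y‖ ^ 2)) t
      - c ^ 2 * ∑ j, iteratedDeriv 2 (fun s =>
          θ t * G (c ^ 2 * t ^ 2 - ‖WithLp.toLp 2 (Function.update y j s)‖ ^ 2)) (y j)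
      = (θ'' + c₁ * θ' t) * G (c ^ 2 * t ^ 2 - ‖y‖ ^ 2)
        + 2 * c ^ 2 * t * (2 * θ' t + c₁ * θ t) * G' (c ^ 2 * t ^ 2 - ‖y‖ ^ 2)
        + 2 * c ^ 2 * θ t * (2 * (c ^ 2 * t ^ 2 - ‖y‖ ^ 2) * G''
          + (Fintype.card ι + 1) * G' (c ^ 2 * t ^ 2 - ‖y‖ ^ 2)) := by
  have htime := hθ.mul (hG.comp t (hasSecondDerivAt_mul_sq_sub (c ^ 2) (‖y‖ ^ 2) t))
  have hspace := sum_iteratedDeriv_two_radial y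
    ((hG.comp (‖y‖ ^ 2) (hasSecondDerivAt_const_sub (c ^ 2 * t ^ 2) _)).const_mul (θ t))
  beta_reduce at hspace
  rw [htime.iteratedDeriv_two, htime.deriv, hspace]
  ring

lemma hasDerivAt_inv_exp_sub_one {lam t : ℝ} (h : lam * t ≠ 0) :
    HasDerivAt (fun s => (exp (lam * s) - 1)⁻¹)
      (-lam * ((exp (lam * t) - 1)⁻¹ + (exp (lam * t) - 1)⁻¹ ^ 2)) t := by
  have hE : exp (lam * t) - 1 ≠ 0 := sub_ne_zero.2 (by rwa [Ne, exp_eq_one_iff])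
  refine ((((hasDerivAt_id' t).const_mul lam).exp.sub_const 1).inv hE).congr_deriv ?_
  field_simp
  ring

lemma hasSecondDerivAt_inv_exp_sub_one {lam t : ℝ} (hlam : lam ≠ 0) (ht : t ≠ 0) :
    HasSecondDerivAt (fun s => (exp (lam * s) - 1)⁻¹)
      (fun s => -lam * ((exp (lam * s) - 1)⁻¹ + (exp (lam * s) - 1)⁻¹ ^ 2))
      (lam ^ 2 * (1 + 2 * (exp (lam * t) - 1)⁻¹)
        * ((exp (lam * t) - 1)⁻¹ + (exp (lam * t) - 1)⁻¹ ^ 2)) t := by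
  have h := hasDerivAt_inv_exp_sub_one (mul_ne_zero hlam ht)
  refine ⟨(eventually_ne_nhds ht).mono fun s hs => hasDerivAt_inv_exp_sub_one
    (mul_ne_zero hlam hs), ((h.add (h.pow 2)).const_mul (-lam)).congr_deriv ?_⟩
  ring

noncomputable def flightProfile (a : ℝ) : ℝ → ℝ :=
  halfPowerSeries (flightCoeff a) (-1 / 2)

lemma hasSecondDerivAt_flightProfile_series (a : ℝ) {x : ℝ} (hx : 0 < x) :
    HasSecondDerivAt (flightProfile a)
      (halfPowerSeries (fun k : ℕ => ((k : ℝ) / 2 + -1 / 2) * flightCoeff a k) (-1 / 2 - 1))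
      (halfPowerSeries (fun k : ℕ => ((k : ℝ) / 2 + (-1 / 2 - 1)) *
        (((k : ℝ) / 2 + -1 / 2) * flightCoeff a k)) (-1 / 2 - 1 - 1) x) x :=
  ⟨eventually_of_mem (Ioi_mem_nhds hx) fun _ hz =>
      hasDerivAt_halfPowerSeries (summable_flightCoeff a) _ hz,
    hasDerivAt_halfPowerSeries (summable_abs_linear_mul (summable_flightCoeff a) _) _ hx⟩

theorem hasSecondDerivAt_flightProfile (a : ℝ) {x : ℝ} (hx : 0 < x) :
    HasSecondDerivAt (flightProfile a) (deriv (flightProfile a))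
      (iteratedDeriv 2 (flightProfile a) x) x :=
  (hasSecondDerivAt_flightProfile_series a hx).hasSecondDerivAt_deriv

theorem flightProfile_ode (a : ℝ) {x : ℝ} (hx : 0 < x) :
    x * iteratedDeriv 2 (flightProfile a) x + 2 * deriv (flightProfile a) x
      = a ^ 2 * flightProfile a x - a / (2 * π) * x ^ (-(3 : ℝ) / 2) := by
  have h := hasSecondDerivAt_flightProfile_series a hx
  set b₁ : ℕ → ℝ := fun k => ((k : ℝ) / 2 + -1 / 2) * flightCoeff a k
  set b₂ : ℕ → ℝ := fun k => ((k : ℝ) / 2 + (-1 / 2 - 1)) * b₁ k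
  set b : ℕ → ℝ := fun k => ((k : ℝ) ^ 2 - 1) / 4 * flightCoeff a k
  have hb₁ := summable_abs_linear_mul (summable_flightCoeff a) (-1 / 2)
  have hs₂ :=
    summable_halfPowerSeries (summable_abs_linear_mul hb₁ (-1 / 2 - 1)) (-1 / 2 - 1) hx
  have hs₁ := (summable_halfPowerSeries hb₁ (-1 / 2 - 1) hx).mul_left 2
  have hsum : x * halfPowerSeries b₂ (-1 / 2 - 1 - 1) x + 2 * halfPowerSeries b₁ (-1 / 2 - 1) x
      = halfPowerSeries b (-1 / 2 - 1) x := by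
    rw [mul_halfPowerSeries _ _ hx, const_mul_halfPowerSeries,
      show (-1 / 2 - 1 - 1 + 1 : ℝ) = -1 / 2 - 1 by norm_num,
      halfPowerSeries_add hs₂ (hs₁.congr fun k => by ring)]
    congr 1
    funext k
    simp only [b₁, b]
    ring
  have hshift : (fun k => b (k + 2)) = fun k => a ^ 2 * flightCoeff a k := by
    funext k
    simp only [b]
    push_cast
    linear_combination flightCoeff_add_two a k
  rw [h.iteratedDeriv_two, h.deriv, hsum,
    halfPowerSeries_eq_add_shift ((hs₂.add hs₁).congr fun k => by ring), hshift,
    ← const_mul_halfPowerSeries]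
  norm_num [flightProfile, b, flightCoeff_zero]
  ring

lemma flightProfile_apply (a x : ℝ) :
    flightProfile a x = ∑' k : ℕ, a ^ (k + 1) * x ^ (((k : ℝ) - 1) / 2)
      / (Gamma (((k : ℝ) + 1) / 2) * Gamma (((k : ℝ) + 3) / 2)) := by
  refine tsum_congr fun k => ?_
  rw [flightCoeff, show ((k : ℝ) - 1) / 2 = (k : ℝ) / 2 + -1 / 2 by ring]
  ring

theorem statement2_general (lam c : ℝ) (hlam : 0 < lam)
    (u : EuclideanSpace ℝ (Fin 3) × ℝ → ℝ)
    (hu : ∀ (y : EuclideanSpace ℝ (Fin 3)) (t : ℝ), u (y, t) =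
      lam / (2 * c) * (1 / (π * (Real.exp (lam * t) - 1))) *
        ∑' k : ℕ,
          (lam / (2 * c)) ^ (k + 1) *
            (c ^ 2 * t ^ 2 - ‖y‖ ^ 2) ^ (((k : ℝ) - 1) / 2) /
            (Real.Gamma (((k : ℝ) + 1) / 2) * Real.Gamma (((k : ℝ) + 3) / 2))) :
    ∀ (y : EuclideanSpace ℝ (Fin 3)) (t : ℝ), 0 < t → ‖y‖ < c * t →
      iteratedDeriv 2 (fun s => u (y, s)) t
        + (2 * lam * Real.exp (lam * t) / (Real.exp (lam * t) - 1)) *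
            deriv (fun s => u (y, s)) t
        - c ^ 2 * ∑ j : Fin 3,
            iteratedDeriv 2 (fun s => u (WithLp.toLp 2 (Function.update y j s), t)) (y j)
      = (-(lam ^ 2) / (Real.exp (lam * t) - 1)) * u (y, t)
          + (-(lam ^ 2) * (c ^ 2 * t ^ 2 - ‖y‖ ^ 2) ^ (-(3 : ℝ) / 2) /
              (2 * π ^ 2 * (Real.exp (lam * t) - 1))) := by
  intro y t ht hyt
  have hc0 : c ≠ 0 := by rintro rfl; linarith [norm_nonneg y]
  have hac : lam = 2 * (lam / (2 * c)) * c := by field_simp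
  generalize lam / (2 * c) = a at hu hac
  have hw : 0 < c ^ 2 * t ^ 2 - ‖y‖ ^ 2 := by nlinarith [norm_nonneg y]
  have hsep : ∀ z s,
      u (z, s) = (exp (lam * s) - 1)⁻¹ * (a / π * flightProfile a (c ^ 2 * s ^ 2 - ‖z‖ ^ 2)) := by
    intro z s; rw [hu, flightProfile_apply, one_div, mul_inv]; ring
  have key := telegraph_mul_radial_eq c (2 * lam * exp (lam * t) / (exp (lam * t) - 1)) t y
    (hasSecondDerivAt_inv_exp_sub_one hlam.ne' ht.ne')
    ((hasSecondDerivAt_flightProfile a hw).const_mul (a / π))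
  beta_reduce at key
  simp only [hsep]
  rw [key, Fintype.card_fin]
  have hode := flightProfile_ode a hw
  have hE : exp (lam * t) - 1 ≠ 0 := (sub_pos.2 (one_lt_exp_iff.2 (mul_pos hlam ht))).ne'
  have hEθ : exp (lam * t) * (exp (lam * t) - 1)⁻¹ = 1 + (exp (lam * t) - 1)⁻¹ := by
    field_simp
    ring
  set θ := (exp (lam * t) - 1)⁻¹
  have hZ : (2 * π ^ 2 * (exp (lam * t) - 1))⁻¹ = θ / (2 * π ^ 2) := by rw [mul_inv]; ring
  set w := c ^ 2 * t ^ 2 - ‖y‖ ^ 2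
  -- `hEθ` carries the Riccati equation `θ' = -λ(θ + θ²)`: it cancels the `G'` terms and turns
  -- `θ'' + c₁ θ'` into `-λ² θ²`.
  linear_combination (4 * c ^ 2 * θ * (a / π)) * hode
    + (4 * lam * c ^ 2 * t * θ * (a / π) * deriv (flightProfile a) w
      - 2 * lam ^ 2 * (θ + θ ^ 2) * (a / π) * flightProfile a w) * hEθ
    + (lam + 2 * a * c) * θ * (w ^ (-(3 : ℝ) / 2) / (2 * π ^ 2) - a / π * flightProfile a w) * hac
    + lam ^ 2 * w ^ (-(3 : ℝ) / 2) * hZ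

/-- the absolutely continuous density of the random flight `Y₃(t)`,
`u(y,t) = (λ/(2c)) (1/(π(e^{λt}-1))) Σ_{k=0}^∞ (λ/(2c))^{k+1}
            (c²t² - ‖y‖²)^{(k-1)/2} / (Γ((k+1)/2) Γ((k+3)/2))`,
satisfies the non-homogeneous telegraph equation with time-varying coefficients
`∂²u/∂t² + c₁(t) ∂u/∂t - c² Δu = c₂(t) u + c₃(y,t)` on the open cone
`{(y,t) : ‖y‖ < ct, t > 0}`, where `c₁(t) = 2λe^{λt}/(e^{λt}-1)`,
`c₂(t) = -λ²/(e^{λt}-1)` and `c₃(y,t) = -λ²(c²t²-‖y‖²)^{-3/2}/(2π²(e^{λt}-1))`. -/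
theorem statement2 (lam c : ℝ) (hlam : 0 < lam) (hc : 0 < c)
    (u : EuclideanSpace ℝ (Fin 3) × ℝ → ℝ)
    (hu : ∀ (y : EuclideanSpace ℝ (Fin 3)) (t : ℝ), u (y, t) =
      lam / (2 * c) * (1 / (π * (Real.exp (lam * t) - 1))) *
        ∑' k : ℕ,
          (lam / (2 * c)) ^ (k + 1) *
            (c ^ 2 * t ^ 2 - ‖y‖ ^ 2) ^ (((k : ℝ) - 1) / 2) /
            (Real.Gamma (((k : ℝ) + 1) / 2) * Real.Gamma (((k : ℝ) + 3) / 2))) :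
    ∀ (y : EuclideanSpace ℝ (Fin 3)) (t : ℝ), 0 < t → ‖y‖ < c * t →
      iteratedDeriv 2 (fun s => u (y, s)) t
        + (2 * lam * Real.exp (lam * t) / (Real.exp (lam * t) - 1)) *
            deriv (fun s => u (y, s)) t
        - c ^ 2 * ∑ j : Fin 3,
            iteratedDeriv 2 (fun s => u (WithLp.toLp 2 (Function.update y j s), t)) (y j)
      = (-(lam ^ 2) / (Real.exp (lam * t) - 1)) * u (y, t)
          + (-(lam ^ 2) * (c ^ 2 * t ^ 2 - ‖y‖ ^ 2) ^ (-(3 : ℝ) / 2) /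
              (2 * π ^ 2 * (Real.exp (lam * t) - 1))) :=
  statement2_general lam c hlam u hu
end

section
/- Let d ≥ 2 be an integer and λ, c > 0. Define f : (0,∞) → ℝ by f(w) = Σ_{k=1}^∞ (λ/(2c))^{k(d−1)} w^{k(d−1)−2} / ( Γ(k(d−1)/2) · Γ((d−1)(k+1)/2) ). Then f satisfies the iterated hyper-Bessel ordinary differential equation T^{(d−1)} f (w) = (λ/c)^{2(d−1)} f(w) for all w > 0, where (T g)(w) = g''(w) + (d/w) g'(w) and T^{(r)} denotes the r-fold iterate of T. -/
/-!
Since `T (w ^ s) = s (s + d - 1) w ^ (s - 2)`, the operator `T^(d-1)` acts termwise on the series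
`f(w) = ∑ a_k w ^ ((k + 1)(d - 1) - 2)`, multiplying `a_k` by a product of `2(d-1)` linear factors
in the exponent and lowering the exponent by `2(d-1)`, i.e. by exactly two steps of the series.
These factors vanish for the first two terms, and for `k + 2` they are ratios of the form
`Γ(x + d - 1) / Γ(x)`, which turn `a_{k+2}` into `(λ/c)^(2(d-1)) a_k`. Termwise differentiation
is legitimate because the coefficients `a_k` decay faster than every geometric sequence.
-/

open Real

noncomputable def hyperBesselT (d : ℕ) (g : ℝ → ℝ) : ℝ → ℝ :=
  fun w => deriv (deriv g) w + ((d : ℝ) / w) * deriv g w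

open Filter Set Topology

def EntireCoeffs (b : ℕ → ℝ) : Prop :=
  ∀ r : ℝ, 0 < r → Summable fun k => |b k| * r ^ k

noncomputable def rpowSeries (b : ℕ → ℝ) (ε q w : ℝ) : ℝ :=
  ∑' k : ℕ, b k * w ^ ((k : ℝ) * ε + q)

namespace EntireCoeffs

variable {b : ℕ → ℝ}

theorem mul_affine (hb : EntireCoeffs b) (α β : ℝ) :
    EntireCoeffs fun k => b k * ((k : ℝ) * α + β) := by
  intro r hr
  refine .of_nonneg_of_le (fun k => by positivity) (fun k => ?_)
    ((hb (2 * r) (by positivity)).mul_left (|α| + |β|))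
  have hk : (k : ℝ) + 1 ≤ 2 ^ k := by exact_mod_cast Nat.lt_two_pow_self
  have hfac : |(k : ℝ) * α + β| ≤ (|α| + |β|) * 2 ^ k :=
    calc |(k : ℝ) * α + β| ≤ (k + 1) * (|α| + |β|) := by
          have := abs_add_le ((k : ℝ) * α) β
          rw [abs_mul, Nat.abs_cast] at this
          nlinarith [abs_nonneg α, abs_nonneg β, (Nat.cast_nonneg k : (0 : ℝ) ≤ k)]
      _ ≤ (|α| + |β|) * 2 ^ k := by rw [mul_comm]; gcongr
  calc |b k * ((k : ℝ) * α + β)| * r ^ k ≤ |b k| * ((|α| + |β|) * 2 ^ k) * r ^ k := by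
        rw [abs_mul]; gcongr
    _ = (|α| + |β|) * (|b k| * (2 * r) ^ k) := by ring

theorem of_abs_succ_le (C : ℝ) (h : ∀ k : ℕ, |b (k + 1)| ≤ C / (k + 1) * |b k|) :
    EntireCoeffs b := by
  intro r hr
  refine summable_of_ratio_norm_eventually_le (r := 1 / 2) (by norm_num) ?_
  have hlim : Tendsto (fun k : ℕ => C * r / ((k : ℝ) + 1)) atTop (𝓝 0) :=
    tendsto_const_div_atTop_nhds_zero_nat (C * r) |>.comp (tendsto_add_atTop_nat 1) |>.congr
      fun k => by simp
  filter_upwards [hlim.eventually (ge_mem_nhds (by norm_num : (0 : ℝ) < 1 / 2))] with k hk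
  simp only [Real.norm_eq_abs, abs_mul, abs_abs, abs_pow, abs_of_pos hr]
  calc |b (k + 1)| * r ^ (k + 1) ≤ C / (k + 1) * |b k| * r ^ (k + 1) := by gcongr; exact h k
    _ = C * r / (k + 1) * (|b k| * r ^ k) := by ring
    _ ≤ 1 / 2 * (|b k| * r ^ k) := by gcongr

end EntireCoeffs

theorem rpow_nat_mul_add {x : ℝ} (hx : 0 < x) (k : ℕ) (ε q : ℝ) :
    x ^ ((k : ℝ) * ε + q) = (x ^ ε) ^ k * x ^ q := by
  rw [rpow_add hx, mul_comm (k : ℝ) ε, rpow_mul_natCast hx.le]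

theorem rpow_le_rpow_add_rpow_s8 {a y c : ℝ} (ha : 0 < a) (hay : a ≤ y) (hyc : y ≤ c) (s : ℝ) :
    y ^ s ≤ a ^ s + c ^ s := by
  have hc : 0 < c := ha.trans_le (hay.trans hyc)
  rcases le_total 0 s with hs | hs
  · linarith [rpow_le_rpow (ha.le.trans hay) hyc hs, rpow_pos_of_pos ha s]
  · linarith [rpow_le_rpow_of_nonpos ha hay hs, rpow_pos_of_pos hc s]

theorem hyperBesselT_congr {d : ℕ} {g h : ℝ → ℝ} {x : ℝ} (hgh : g =ᶠ[𝓝 x] h) :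
    hyperBesselT d g x = hyperBesselT d h x := by
  simp only [hyperBesselT, hgh.deriv.deriv_eq, hgh.deriv_eq]

theorem Set.EqOn.iterate_hyperBesselT {d n : ℕ} {g h : ℝ → ℝ} (hgh : EqOn g h (Ioi 0)) :
    EqOn ((hyperBesselT d)^[n] g) ((hyperBesselT d)^[n] h) (Ioi 0) := by
  induction n with
  | zero => exact hgh
  | succ n ih =>
    intro x hx
    simp only [Function.iterate_succ_apply']
    exact hyperBesselT_congr (ih.eventuallyEq_of_mem (Ioi_mem_nhds hx))

/-- `(hyperBesselT d)^[n]` maps `w ^ s` to `hyperBesselSymbol d n s * w ^ (s - 2 * n)`. -/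
noncomputable def hyperBesselSymbol (d n : ℕ) (s : ℝ) : ℝ :=
  ∏ j ∈ Finset.range n, (s - 2 * j) * (s - 2 * j + (d - 1))

theorem hyperBesselSymbol_succ (d n : ℕ) (s : ℝ) :
    hyperBesselSymbol d (n + 1) s = s * (s + (d - 1)) * hyperBesselSymbol d n (s - 2) := by
  rw [hyperBesselSymbol, Finset.prod_range_succ', mul_comm, hyperBesselSymbol]
  push_cast
  simp only [mul_zero, sub_zero]
  congr 1
  exact Finset.prod_congr rfl fun j _ => by ring

section rpowSeries

variable {b : ℕ → ℝ} {ε q x : ℝ}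

theorem EntireCoeffs.summable_abs_mul_rpow (hb : EntireCoeffs b) (hx : 0 < x) :
    Summable fun k => |b k| * x ^ ((k : ℝ) * ε + q) := by
  refine ((hb (x ^ ε) (rpow_pos_of_pos hx ε)).mul_right (x ^ q)).congr fun k => ?_
  rw [rpow_nat_mul_add hx]; ring

theorem EntireCoeffs.summable_rpowSeries (hb : EntireCoeffs b) (hx : 0 < x) :
    Summable fun k => b k * x ^ ((k : ℝ) * ε + q) :=
  .of_norm_bounded (hb.summable_abs_mul_rpow hx) fun k => by
    rw [norm_mul, Real.norm_eq_abs, Real.norm_eq_abs, abs_of_pos (rpow_pos_of_pos hx _)]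

theorem hasDerivAt_rpowSeries (hb : EntireCoeffs b) (hx : 0 < x) :
    HasDerivAt (rpowSeries b ε q)
      (rpowSeries (fun k => b k * ((k : ℝ) * ε + q)) ε (q - 1) x) x := by
  set b' := fun k => b k * ((k : ℝ) * ε + q)
  have hb' : EntireCoeffs b' := hb.mul_affine ε q
  have hmem : x ∈ Ioo (x / 2) (2 * x) := ⟨by linarith, by linarith⟩
  have hexp : ∀ k : ℕ, (k : ℝ) * ε + q - 1 = k * ε + (q - 1) := fun k => by ring
  refine hasDerivAt_tsum_of_isPreconnected (g := fun k w => b k * w ^ ((k : ℝ) * ε + q))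
    (g' := fun k w => b' k * w ^ ((k : ℝ) * ε + (q - 1)))
    (u := fun k => |b' k| * (x / 2) ^ ((k : ℝ) * ε + (q - 1)) +
      |b' k| * (2 * x) ^ ((k : ℝ) * ε + (q - 1)))
    ((hb'.summable_abs_mul_rpow (by linarith)).add (hb'.summable_abs_mul_rpow (by linarith)))
    isOpen_Ioo isPreconnected_Ioo (fun k y hy => ?_) (fun k y hy => ?_) hmem
    (hb.summable_rpowSeries hx) hmem
  · have hy : 0 < y := by linarith [hy.1]
    simpa only [b', hexp, mul_assoc] using
      (hasDerivAt_rpow_const (p := (k : ℝ) * ε + q) (Or.inl hy.ne')).const_mul (b k)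
  · have hy0 : 0 < y := by linarith [hy.1]
    rw [norm_mul, Real.norm_eq_abs, Real.norm_eq_abs, abs_of_pos (rpow_pos_of_pos hy0 _),
      ← mul_add]
    exact mul_le_mul_of_nonneg_left
      (rpow_le_rpow_add_rpow_s8 (by linarith) hy.1.le hy.2.le _) (abs_nonneg _)

theorem hyperBesselT_rpowSeries (d : ℕ) (hb : EntireCoeffs b) (hx : 0 < x) :
    hyperBesselT d (rpowSeries b ε q) x =
      rpowSeries (fun k => b k * (((k : ℝ) * ε + q) * ((k : ℝ) * ε + q + (d - 1)))) ε (q - 2)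
        x := by
  set b₁ := fun k : ℕ => b k * ((k : ℝ) * ε + q)
  have hb₁ : EntireCoeffs b₁ := hb.mul_affine ε q
  have hderiv : deriv (rpowSeries b ε q) =ᶠ[𝓝 x] rpowSeries b₁ ε (q - 1) :=
    eventually_of_mem (Ioi_mem_nhds hx) fun y hy => (hasDerivAt_rpowSeries hb hy).deriv
  rw [hyperBesselT, hderiv.deriv_eq, (hasDerivAt_rpowSeries hb₁ hx).deriv,
    (hasDerivAt_rpowSeries hb hx).deriv, rpowSeries, rpowSeries, ← tsum_mul_left,
    ← ((hb₁.mul_affine ε (q - 1)).summable_rpowSeries hx).tsum_add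
      ((hb₁.summable_rpowSeries hx).mul_left _)]
  refine tsum_congr fun k => ?_
  have hpow : x ^ ((k : ℝ) * ε + (q - 1)) = x ^ ((k : ℝ) * ε + (q - 2)) * x := by
    rw [← rpow_add_one hx.ne']; ring_nf
  rw [hpow, show q - 1 - 1 = q - 2 by ring]
  field_simp
  ring

theorem iterate_hyperBesselT_rpowSeries (d n : ℕ) (hb : EntireCoeffs b) (hx : 0 < x) :
    (hyperBesselT d)^[n] (rpowSeries b ε q) x =
      rpowSeries (fun k => b k * hyperBesselSymbol d n ((k : ℝ) * ε + q)) ε (q - 2 * n) x := by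
  induction n generalizing b q with
  | zero => simp [hyperBesselSymbol]
  | succ n ih =>
    have hb₂ : EntireCoeffs fun k : ℕ =>
        b k * (((k : ℝ) * ε + q) * ((k : ℝ) * ε + q + (d - 1))) := by
      simpa only [mul_assoc, add_assoc] using (hb.mul_affine ε q).mul_affine ε (q + (d - 1))
    have hT : EqOn (hyperBesselT d (rpowSeries b ε q)) (rpowSeries _ ε (q - 2)) (Ioi 0) :=
      fun y hy => hyperBesselT_rpowSeries d hb hy
    rw [Function.iterate_succ_apply, hT.iterate_hyperBesselT hx, ih hb₂]
    simp only [rpowSeries, hyperBesselSymbol_succ, Nat.cast_succ]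
    refine tsum_congr fun k => ?_
    ring_nf

theorem rpowSeries_shift {m : ℕ} (hb : ∀ i < m, b i = 0) :
    rpowSeries b ε q x = rpowSeries (fun k => b (k + m)) ε (q + m * ε) x := by
  unfold rpowSeries
  rw [← (add_left_injective m).tsum_eq (f := fun k : ℕ => b k * x ^ ((k : ℝ) * ε + q))]
  · refine tsum_congr fun k => ?_
    push_cast
    ring_nf
  · intro i hi
    have him : m ≤ i := by
      by_contra! h
      exact hi (by simp [hb i h])
    exact ⟨i - m, Nat.sub_add_cancel him⟩

end rpowSeries

theorem rpowSeries_const_mul (a : ℝ) (b : ℕ → ℝ) (ε q x : ℝ) :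
    rpowSeries (fun k => a * b k) ε q x = a * rpowSeries b ε q x := by
  simp only [rpowSeries, mul_assoc, tsum_mul_left]

theorem Real.Gamma_add_nat_eq_prod_mul {u : ℝ} (hu : 0 < u) (n : ℕ) :
    Gamma (u + n) = (∏ i ∈ Finset.range n, (u + i)) * Gamma u := by
  induction n with
  | zero => simp
  | succ n ih =>
    rw [Nat.cast_succ, ← add_assoc, Gamma_add_one (by positivity), ih, Finset.prod_range_succ]
    ring

theorem Real.mul_Gamma_le_Gamma_add_nat {u : ℝ} (hu : 0 < u) {n : ℕ} (hn : 1 ≤ n) :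
    u * Gamma u ≤ Gamma (u + n) := by
  obtain ⟨m, rfl⟩ : ∃ m, n = m + 1 := ⟨n - 1, by omega⟩
  have hprod : 1 ≤ ∏ i ∈ Finset.range m, (u + ↑(i + 1)) :=
    Finset.one_le_prod fun i _ => by push_cast; linarith [(Nat.cast_nonneg i : (0 : ℝ) ≤ i)]
  rw [Gamma_add_nat_eq_prod_mul hu, Finset.prod_range_succ', Nat.cast_zero, add_zero, mul_assoc]
  exact le_mul_of_one_le_left (by positivity [Gamma_pos_of_pos hu]) hprod

/-- With `e = d - 1` and `ρ = λ / (2c)`, the coefficient of `w ^ (k * e + (e - 2))` in `f`,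
i.e. the term of index `k + 1` in the informal statement. -/
noncomputable def radialCoeff (e : ℕ) (ρ : ℝ) (k : ℕ) : ℝ :=
  ρ ^ ((k + 1) * e) / (Gamma ((k + 1) * e / 2) * Gamma ((k + 2) * e / 2))

theorem entireCoeffs_radialCoeff {e : ℕ} (he : 1 ≤ e) (ρ : ℝ) :
    EntireCoeffs (radialCoeff e ρ) := by
  refine .of_abs_succ_le (2 * |ρ| ^ e) fun k => ?_
  have hk : (0 : ℝ) ≤ k := Nat.cast_nonneg k
  have he' : (1 : ℝ) ≤ e := by exact_mod_cast he
  set u : ℝ := (k + 1) * e / 2 with hu_def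
  set v : ℝ := (k + 2) * e / 2 with hv_def
  have hu : 0 < u := by positivity
  have hΓu := Gamma_pos_of_pos hu
  have hΓv := Gamma_pos_of_pos (by positivity : 0 < v)
  have hΓue := Gamma_pos_of_pos (by positivity : 0 < u + e)
  have hgrowth : (k + 1) / 2 * Gamma u ≤ Gamma (u + e) :=
    le_trans (by gcongr; rw [hu_def]; nlinarith) (mul_Gamma_le_Gamma_add_nat hu he)
  have hargs : ((↑(k + 1) : ℝ) + 1) * e / 2 = v ∧
      ((↑(k + 1) : ℝ) + 2) * e / 2 = u + e := by
    constructor <;> push_cast <;> ring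
  simp only [radialCoeff, abs_div, abs_mul, abs_pow, ← hu_def, ← hv_def, hargs.1, hargs.2,
    abs_of_pos hΓu, abs_of_pos hΓv, abs_of_pos hΓue]
  rw [show (k + 1 + 1) * e = e + (k + 1) * e by ring, pow_add]
  calc |ρ| ^ e * |ρ| ^ ((k + 1) * e) / (Gamma v * Gamma (u + e))
      ≤ |ρ| ^ e * |ρ| ^ ((k + 1) * e) / (Gamma v * ((k + 1) / 2 * Gamma u)) := by
        gcongr
    _ = 2 * |ρ| ^ e / (k + 1) * (|ρ| ^ ((k + 1) * e) / (Gamma u * Gamma v)) := by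
        field_simp

theorem hyperBesselSymbol_mul_Gamma (e : ℕ) {u : ℝ} (hu : 0 < u) :
    hyperBesselSymbol (e + 1) e (2 * u + 2 * e - 2) * (Gamma u * Gamma (u + e / 2)) =
      4 ^ e * (Gamma (u + e) * Gamma (u + e / 2 + e)) := by
  have hsymb : hyperBesselSymbol (e + 1) e (2 * u + 2 * e - 2) =
      ∏ i ∈ Finset.range e, 4 * ((u + i) * (u + e / 2 + i)) := by
    rw [hyperBesselSymbol,
      ← Finset.prod_range_reflect (fun i : ℕ => 4 * ((u + i) * (u + e / 2 + i)))]
    refine Finset.prod_congr rfl fun j hj => ?_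
    have hj : j < e := Finset.mem_range.mp hj
    rw [Nat.cast_sub (by omega), Nat.cast_sub (by omega)]
    push_cast
    ring
  rw [hsymb, Finset.prod_mul_distrib, Finset.prod_const, Finset.card_range, Finset.prod_mul_distrib,
    Gamma_add_nat_eq_prod_mul hu, Gamma_add_nat_eq_prod_mul (by positivity : 0 < u + e / 2)]
  ring

theorem radialCoeff_mul_hyperBesselSymbol {e : ℕ} (he : 1 ≤ e) (ρ : ℝ) (k : ℕ) :
    radialCoeff e ρ (k + 2) * hyperBesselSymbol (e + 1) e ((↑(k + 2) : ℝ) * e + (e - 2)) =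
      (2 * ρ) ^ (2 * e) * radialCoeff e ρ k := by
  have he' : (1 : ℝ) ≤ e := by exact_mod_cast he
  set u : ℝ := (k + 1) * e / 2 with hu_def
  have hu : 0 < u := by positivity
  have key := hyperBesselSymbol_mul_Gamma e hu
  have hargs : ((↑(k + 2) : ℝ) + 1) * e / 2 = u + e ∧
      ((↑(k + 2) : ℝ) + 2) * e / 2 = u + e / 2 + e ∧
      (↑(k + 2) : ℝ) * e + (e - 2) = 2 * u + 2 * e - 2 ∧
      ((k : ℝ) + 2) * e / 2 = u + e / 2 := by
    refine ⟨?_, ?_, ?_, ?_⟩ <;> push_cast <;> ring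
  have hΓ := mul_pos (Gamma_pos_of_pos hu) (Gamma_pos_of_pos (by positivity : 0 < u + e / 2))
  have hΓ' := mul_pos (Gamma_pos_of_pos (by positivity : 0 < u + e))
    (Gamma_pos_of_pos (by positivity : 0 < u + e / 2 + e))
  simp only [radialCoeff, ← hu_def, hargs.1, hargs.2.1, hargs.2.2.1, hargs.2.2.2]
  rw [show (k + 2 + 1) * e = (k + 1) * e + 2 * e by ring, pow_add, mul_pow, pow_mul 2 2 e]
  generalize hyperBesselSymbol (e + 1) e (2 * u + 2 * e - 2) = S at key ⊢
  generalize Gamma u * Gamma (u + e / 2) = Γ₁ at hΓ key ⊢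
  generalize Gamma (u + e) * Gamma (u + e / 2 + e) = Γ₂ at hΓ' key ⊢
  field_simp
  linear_combination ρ ^ ((k + 1) * e) * ρ ^ (2 * e) * key

theorem hyperBesselSymbol_eq_zero {e i : ℕ} (he : 1 ≤ e) (hi : i < 2) :
    hyperBesselSymbol (e + 1) e ((i : ℝ) * e + (e - 2)) = 0 := by
  refine Finset.prod_eq_zero (i := e - 1) (Finset.mem_range.mpr (by omega)) ?_
  rw [Nat.cast_sub he]
  interval_cases i <;> push_cast <;> ring

theorem statement8_general (d : ℕ) (hd : 2 ≤ d) (lam c : ℝ)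
    (f : ℝ → ℝ)
    (hf : ∀ w : ℝ, f w = ∑' k : ℕ,
      (lam / (2 * c)) ^ ((k + 1) * (d - 1)) *
        w ^ ((((k : ℝ) + 1) * ((d : ℝ) - 1)) - 2) /
        (Real.Gamma (((k : ℝ) + 1) * ((d : ℝ) - 1) / 2) *
          Real.Gamma (((d : ℝ) - 1) * (((k : ℝ) + 1) + 1) / 2))) :
    ∀ w : ℝ, 0 < w →
      (hyperBesselT d)^[d - 1] f w = (lam / c) ^ (2 * (d - 1)) * f w := by
  obtain ⟨e, rfl⟩ : ∃ e, d = e + 1 := ⟨d - 1, by omega⟩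
  have he : 1 ≤ e := by omega
  set ρ := lam / (2 * c)
  have hf' : f = rpowSeries (radialCoeff e ρ) e (e - 2) := by
    funext w
    rw [hf, rpowSeries]
    refine tsum_congr fun k => ?_
    simp only [radialCoeff, Nat.add_sub_cancel, Nat.cast_add, Nat.cast_one, add_sub_cancel_right]
    ring_nf
  have hlc : lam / c = 2 * ρ := by ring
  intro w hw
  rw [Nat.add_sub_cancel]
  calc (hyperBesselT (e + 1))^[e] f w
      = rpowSeries (fun k => radialCoeff e ρ k * hyperBesselSymbol (e + 1) e (k * e + (e - 2)))
          e (e - 2 - 2 * e) w := by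
        rw [hf']
        exact iterate_hyperBesselT_rpowSeries _ _ (entireCoeffs_radialCoeff he ρ) hw
    _ = rpowSeries (fun k => (2 * ρ) ^ (2 * e) * radialCoeff e ρ k) e (e - 2) w := by
        rw [rpowSeries_shift (m := 2) fun i hi => by rw [hyperBesselSymbol_eq_zero he hi, mul_zero]]
        simp only [radialCoeff_mul_hyperBesselSymbol he]
        ring_nf
    _ = (lam / c) ^ (2 * e) * f w := by rw [rpowSeries_const_mul, hf', hlc]

/-- for `d ≥ 2`, `λ, c > 0`, the radial density
`f(w) = Σ_{k=1}^∞ (λ/(2c))^{k(d-1)} w^{k(d-1)-2} / (Γ(k(d-1)/2) Γ((d-1)(k+1)/2))`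
satisfies the iterated hyper-Bessel ODE `T^(d-1) f (w) = (λ/c)^{2(d-1)} f(w)`
for all `w > 0`, where `T g = g'' + (d/w) g'`. -/
theorem statement8 (d : ℕ) (hd : 2 ≤ d) (lam c : ℝ) (hlam : 0 < lam) (hc : 0 < c)
    (f : ℝ → ℝ)
    (hf : ∀ w : ℝ, f w = ∑' k : ℕ,
      (lam / (2 * c)) ^ ((k + 1) * (d - 1)) *
        w ^ ((((k : ℝ) + 1) * ((d : ℝ) - 1)) - 2) /
        (Real.Gamma (((k : ℝ) + 1) * ((d : ℝ) - 1) / 2) *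
          Real.Gamma (((d : ℝ) - 1) * (((k : ℝ) + 1) + 1) / 2))) :
    ∀ w : ℝ, 0 < w →
      (hyperBesselT d)^[d - 1] f w = (lam / c) ^ (2 * (d - 1)) * f w :=
  statement8_general d hd lam c f hf
end

section
/- Let d ≥ 2 be an integer, λ > 0, and t > 0. Define h : ℝ → ℝ by h(u) = Σ_{k=0}^∞ (λt)^{k(d−1)} u^{k(d−1)+d−2} / Γ((k+1)(d−1)). Then h is infinitely differentiable and its (d−1)-st derivative satisfies h^{(d−1)}(u) = (λt)^{d−1} h(u) for all u ∈ ℝ. -/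
open Real

/-- Sum of a power series with coefficients `e`. -/
noncomputable def pS10 (e : ℕ → ℝ) (u : ℝ) : ℝ := ∑' n : ℕ, e n * u ^ n

/-- Coefficientwise differentiation. -/
def shiftc10 (e : ℕ → ℝ) : ℕ → ℝ := fun n => ((n : ℝ) + 1) * e (n + 1)

/-- Coefficients dominated by an exponential-type bound. -/
def GoodC10 (e : ℕ → ℝ) : Prop :=
  ∃ C B : ℝ, 0 ≤ B ∧ ∀ n : ℕ, |e n| ≤ C * B ^ n / (n.factorial : ℝ)

lemma summable_nat_mul_pow_div_factorial (x : ℝ) :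
    Summable (fun n : ℕ => (n : ℝ) * x ^ n / n.factorial) := by
  apply (summable_nat_add_iff 1).mp
  have : (fun n : ℕ => ((n + 1 : ℕ) : ℝ) * x ^ (n + 1) / ((n + 1).factorial : ℝ))
      = fun n : ℕ => x * (x ^ n / n.factorial) := by
    funext n
    have h1 : ((n + 1).factorial : ℝ) = ((n : ℝ) + 1) * n.factorial := by
      push_cast [Nat.factorial_succ]; ring
    have h2 : (n.factorial : ℝ) ≠ 0 := by positivity
    have h3 : ((n : ℝ) + 1) ≠ 0 := by positivity
    rw [h1, pow_succ]
    push_cast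
    field_simp
  rw [this]
  exact (Real.summable_pow_div_factorial x).mul_left x

lemma goodC10_shift {e : ℕ → ℝ} (he : GoodC10 e) : GoodC10 (shiftc10 e) := by
  obtain ⟨C, B, hB, hle⟩ := he
  refine ⟨C * B, B, hB, fun n => ?_⟩
  have h1 := hle (n + 1)
  have hfac : ((n + 1).factorial : ℝ) = ((n : ℝ) + 1) * n.factorial := by
    push_cast [Nat.factorial_succ]; ring
  have hn1 : (0 : ℝ) < (n : ℝ) + 1 := by positivity
  have hne : (n.factorial : ℝ) ≠ 0 := by positivity
  calc |shiftc10 e n| = ((n : ℝ) + 1) * |e (n + 1)| := by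
        rw [shiftc10, abs_mul, abs_of_pos hn1]
    _ ≤ ((n : ℝ) + 1) * (C * B ^ (n + 1) / ((n + 1).factorial : ℝ)) :=
        mul_le_mul_of_nonneg_left h1 hn1.le
    _ = C * B * B ^ n / n.factorial := by
        rw [hfac, pow_succ]; field_simp

lemma goodC10_summable {e : ℕ → ℝ} (he : GoodC10 e) (u : ℝ) :
    Summable (fun n : ℕ => e n * u ^ n) := by
  obtain ⟨C, B, hB, hle⟩ := he
  apply Summable.of_norm_bounded (g := fun n : ℕ => C * ((B * |u|) ^ n / n.factorial))
    ((Real.summable_pow_div_factorial (B * |u|)).mul_left C)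
  intro n
  rw [norm_mul, norm_pow, Real.norm_eq_abs, Real.norm_eq_abs]
  calc |e n| * |u| ^ n ≤ C * B ^ n / n.factorial * |u| ^ n :=
        mul_le_mul_of_nonneg_right (hle n) (by positivity)
    _ = C * ((B * |u|) ^ n / n.factorial) := by rw [mul_pow]; ring

lemma goodC10_hasDerivAt {e : ℕ → ℝ} (he : GoodC10 e) (u : ℝ) :
    HasDerivAt (pS10 e) (pS10 (shiftc10 e) u) u := by
  obtain ⟨C, B, hB, hle⟩ := he
  set R : ℝ := |u| + 1 with hRdef
  have hR1 : (1 : ℝ) ≤ R := by rw [hRdef]; have := abs_nonneg u; linarith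
  set w : ℕ → ℝ := fun n => |C| * ((n : ℝ) * (B * R) ^ n / n.factorial) with hwdef
  have hw : Summable w :=
    (summable_nat_mul_pow_div_factorial (B * R)).mul_left |C|
  have key : ∀ (n : ℕ) (y : ℝ), y ∈ Metric.ball u 1 →
      ‖e n * ((n : ℝ) * y ^ (n - 1))‖ ≤ w n := by
    intro n y hy
    have hyR : |y| ≤ R := by
      have : |y - u| < 1 := by simpa [Real.dist_eq] using hy
      have := abs_sub_abs_le_abs_sub y u
      simp only [hRdef]; linarith
    have hR0 : (0 : ℝ) < R := lt_of_lt_of_le one_pos hR1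
    have hyn : |y| ^ (n - 1) ≤ R ^ n := by
      calc |y| ^ (n - 1) ≤ R ^ (n - 1) := pow_le_pow_left₀ (abs_nonneg y) hyR _
        _ ≤ R ^ n := pow_le_pow_right₀ hR1 (Nat.sub_le n 1)
    have hCle : |e n| ≤ |C| * B ^ n / n.factorial := by
      refine le_trans (hle n) ?_
      have h0 : (0:ℝ) ≤ B ^ n / n.factorial := by positivity
      calc C * B ^ n / n.factorial = C * (B ^ n / n.factorial) := by ring
        _ ≤ |C| * (B ^ n / n.factorial) := mul_le_mul_of_nonneg_right (le_abs_self C) h0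
        _ = |C| * B ^ n / n.factorial := by ring
    calc ‖e n * ((n : ℝ) * y ^ (n - 1))‖
        = |e n| * ((n : ℝ) * |y| ^ (n - 1)) := by
          simp [abs_mul, abs_pow, Nat.abs_cast]
      _ ≤ (|C| * B ^ n / n.factorial) * ((n : ℝ) * R ^ n) := by
          apply mul_le_mul hCle ?_ (by positivity) (by positivity)
          exact mul_le_mul_of_nonneg_left hyn (Nat.cast_nonneg n)
      _ = w n := by
          simp only [hwdef, mul_pow]
          field_simp
  have hsum0 : Summable (fun n : ℕ => e n * u ^ n) := goodC10_summable ⟨C, B, hB, hle⟩ u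
  have hmem : u ∈ Metric.ball u 1 := Metric.mem_ball_self one_pos
  have hd : HasDerivAt (fun z => ∑' n : ℕ, e n * z ^ n)
      (∑' n : ℕ, e n * ((n : ℝ) * u ^ (n - 1))) u :=
    hasDerivAt_tsum_of_isPreconnected hw Metric.isOpen_ball
      (convex_ball u 1).isPreconnected
      (fun n y _ => (hasDerivAt_pow n y).const_mul (e n))
      key hmem hsum0 hmem
  have hsum' : Summable (fun n : ℕ => e n * ((n : ℝ) * u ^ (n - 1))) :=
    Summable.of_norm_bounded (g := w) hw (fun n => key n u hmem)
  have heq : (∑' n : ℕ, e n * ((n : ℝ) * u ^ (n - 1))) = pS10 (shiftc10 e) u := by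
    rw [Summable.tsum_eq_zero_add hsum']
    simp only [Nat.cast_zero, zero_mul, mul_zero, zero_add]
    rw [pS10]
    apply tsum_congr
    intro n
    simp only [shiftc10, Nat.add_sub_cancel]
    push_cast
    ring
  have hps : pS10 e = fun z => ∑' n : ℕ, e n * z ^ n := rfl
  rw [hps, ← heq]
  exact hd

lemma goodC10_iter (j : ℕ) : ∀ e : ℕ → ℝ, GoodC10 e →
    GoodC10 (shiftc10^[j] e) ∧ iteratedDeriv j (pS10 e) = pS10 (shiftc10^[j] e) := by
  induction j with
  | zero => exact fun e he => ⟨he, by simp⟩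
  | succ j ih =>
    intro e he
    have hder : deriv (pS10 e) = pS10 (shiftc10 e) :=
      funext fun u => (goodC10_hasDerivAt he u).deriv
    have h2 := ih (shiftc10 e) (goodC10_shift he)
    constructor
    · rw [Function.iterate_succ_apply]; exact h2.1
    · rw [iteratedDeriv_succ', hder, Function.iterate_succ_apply]; exact h2.2

lemma shiftc10_iterate (j : ℕ) : ∀ (e : ℕ → ℝ) (n : ℕ), shiftc10^[j] e n =
    (∏ i ∈ Finset.range j, ((n + i + 1 : ℕ) : ℝ)) * e (n + j) := by
  induction j with
  | zero => intro e n; simp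
  | succ j ih =>
    intro e n
    rw [Function.iterate_succ_apply, ih (shiftc10 e) n, Finset.prod_range_succ]
    simp only [shiftc10]
    have harg : n + (j + 1) = n + j + 1 := by omega
    rw [harg]
    push_cast
    ring

lemma fact_prod10 (n : ℕ) : ∀ j : ℕ,
    (n.factorial : ℝ) * ∏ i ∈ Finset.range j, ((n + i + 1 : ℕ) : ℝ)
      = ((n + j).factorial : ℝ) := by
  intro j
  induction j with
  | zero => simp
  | succ j ih =>
    rw [Finset.prod_range_succ, ← mul_assoc, ih,
      show n + (j + 1) = (n + j) + 1 by omega, Nat.factorial_succ]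
    push_cast
    ring

/-- for `d ≥ 2`, `λ > 0`, `t > 0`, the function
`h(u) = Σ_{k=0}^∞ (λt)^{k(d-1)} u^{k(d-1)+d-2} / Γ((k+1)(d-1))` is infinitely
differentiable and its `(d-1)`-st derivative satisfies
`h^{(d-1)}(u) = (λt)^{d-1} h(u)` for all `u ∈ ℝ`. -/
theorem statement10 (d : ℕ) (hd : 2 ≤ d) (lam t : ℝ) (hlam : 0 < lam) (ht : 0 < t)
    (h : ℝ → ℝ)
    (hh : ∀ u : ℝ, h u = ∑' k : ℕ,
      (lam * t) ^ (k * (d - 1)) * u ^ (k * (d - 1) + d - 2) /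
        Real.Gamma (((k : ℝ) + 1) * ((d : ℝ) - 1))) :
    ContDiff ℝ (⊤ : ℕ∞) h ∧
      ∀ u : ℝ, iteratedDeriv (d - 1) h u = (lam * t) ^ (d - 1) * h u := by
  set a := lam * t with hadef
  have ha0 : 0 < a := mul_pos hlam ht
  set m := d - 1 with hmdef
  have hm1 : 1 ≤ m := by omega
  set B := max a 1 with hBdef
  have hB1 : (1 : ℝ) ≤ B := le_max_right _ _
  have hB0 : (0 : ℝ) < B := lt_of_lt_of_le one_pos hB1
  set c : ℕ → ℝ := fun n => if m ∣ (n + 1) then a ^ (n + 1 - m) / n.factorial else 0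
    with hcdef
  -- Good bound
  have hgood : GoodC10 c := by
    refine ⟨B, B, hB0.le, fun n => ?_⟩
    simp only [hcdef]
    by_cases hdvd : m ∣ (n + 1)
    · rw [if_pos hdvd]
      have hval : (0:ℝ) ≤ a ^ (n + 1 - m) / n.factorial := by positivity
      rw [abs_of_nonneg hval]
      have hnum : a ^ (n + 1 - m) ≤ B * B ^ n := by
        calc a ^ (n + 1 - m) ≤ B ^ (n + 1 - m) :=
              pow_le_pow_left₀ ha0.le (le_max_left a 1) _
          _ ≤ B ^ (n + 1) := pow_le_pow_right₀ hB1 (by omega)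
          _ = B * B ^ n := by rw [pow_succ]; ring
      gcongr
    · rw [if_neg hdvd]; simp; positivity
  -- h equals the power series sum
  have hfun : h = pS10 c := by
    funext u
    rw [hh, pS10]
    have hinj : Function.Injective (fun k : ℕ => k * m + (m - 1)) := by
      intro k1 k2 hk
      simp only at hk
      have : k1 * m = k2 * m := by omega
      exact Nat.eq_of_mul_eq_mul_right (by omega) this
    have hsupp : Function.support (fun n => c n * u ^ n) ⊆
        Set.range (fun k : ℕ => k * m + (m - 1)) := by
      intro n hn
      have hcn : c n ≠ 0 := left_ne_zero_of_mul hn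
      have hdvd : m ∣ (n + 1) := by
        by_contra hcon
        simp only [hcdef, if_neg hcon] at hcn
        exact hcn rfl
      obtain ⟨q, hq⟩ := hdvd
      match q, hq with
      | 0, hq => omega
      | (k + 1), hq =>
        refine ⟨k, ?_⟩
        show k * m + (m - 1) = n
        rw [Nat.mul_succ] at hq
        have : m * k = k * m := Nat.mul_comm m k
        omega
    rw [← Function.Injective.tsum_eq hinj hsupp]
    apply tsum_congr
    intro k
    have hexp : k * m + d - 2 = k * m + (m - 1) := by omega
    have hidx1 : (k * m + (m - 1)) + 1 = k * m + m := by omega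
    have hdvd : m ∣ (k * m + (m - 1)) + 1 := by
      rw [hidx1]
      exact ⟨k + 1, by ring⟩
    have hcval : c (k * m + (m - 1)) =
        a ^ (k * m) / ((k * m + (m - 1)).factorial : ℝ) := by
      simp only [hcdef, if_pos hdvd]
      congr 1
      rw [hidx1]
      congr 1
      omega
    have hGamma : Real.Gamma (((k : ℝ) + 1) * ((d : ℝ) - 1)) =
        ((k * m + (m - 1)).factorial : ℝ) := by
      have hdm : ((d : ℝ) - 1) = (m : ℝ) := by
        simp only [hmdef]
        rw [Nat.cast_sub (by omega)]
        norm_num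
      have harg : ((k : ℝ) + 1) * ((d : ℝ) - 1) = ((k * m + (m - 1) : ℕ) : ℝ) + 1 := by
        rw [hdm]
        push_cast [Nat.cast_sub (show 1 ≤ m by omega)]
        ring
      rw [harg, Real.Gamma_nat_eq_factorial]
    rw [hGamma, hexp, hcval]
    ring
  -- Analyticity
  have hofsum : (FormalMultilinearSeries.ofScalars ℝ c).sum = pS10 c := by
    funext u
    rw [show (FormalMultilinearSeries.ofScalars ℝ c).sum =
      FormalMultilinearSeries.ofScalarsSum c from rfl,
      FormalMultilinearSeries.ofScalars_sum_eq, pS10]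
    simp [smul_eq_mul]
  have hradius : (FormalMultilinearSeries.ofScalars ℝ c).radius = ⊤ := by
    apply FormalMultilinearSeries.radius_eq_top_of_summable_norm
    intro r
    obtain ⟨C, Bb, hBb, hle⟩ := hgood
    apply Summable.of_norm_bounded (g := fun n : ℕ => C * ((Bb * r) ^ n / n.factorial))
      ((Real.summable_pow_div_factorial (Bb * r)).mul_left C)
    intro n
    rw [Real.norm_eq_abs, abs_mul]
    have h1 : |‖FormalMultilinearSeries.ofScalars ℝ c n‖| = |c n| := by
      rw [abs_norm, FormalMultilinearSeries.ofScalars_norm, Real.norm_eq_abs]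
    rw [h1, abs_pow, NNReal.abs_eq]
    calc |c n| * (r : ℝ) ^ n ≤ C * Bb ^ n / n.factorial * (r : ℝ) ^ n :=
          mul_le_mul_of_nonneg_right (hle n) (by positivity)
      _ = C * ((Bb * r) ^ n / n.factorial) := by rw [mul_pow]; ring
  have hps : HasFPowerSeriesOnBall (pS10 c) (FormalMultilinearSeries.ofScalars ℝ c)
      0 ⊤ := by
    have h0 : 0 < (FormalMultilinearSeries.ofScalars ℝ c).radius := by
      rw [hradius]; exact ENNReal.zero_lt_top
    have := (FormalMultilinearSeries.ofScalars ℝ c).hasFPowerSeriesOnBall h0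
    rw [hradius, hofsum] at this
    exact this
  have hanal : AnalyticOnNhd ℝ (pS10 c) Set.univ := by
    intro x _
    exact hps.analyticAt_of_mem (by simp [EMetric.mem_ball, edist_lt_top])
  have hcd : ContDiff ℝ (⊤ : ℕ∞) h := by
    rw [hfun]
    exact (contDiff_omega_iff_analyticOnNhd.2 hanal).of_le le_top
  refine ⟨hcd, fun u => ?_⟩
  -- the derivative identity
  have hiter := (goodC10_iter m c hgood).2
  have hcoeff : ∀ n : ℕ, shiftc10^[m] c n = a ^ m * c n := by
    intro n
    rw [shiftc10_iterate m c n]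
    by_cases hdvd : m ∣ (n + 1)
    · have hdvd2 : m ∣ (n + m) + 1 := by
        obtain ⟨q, hq⟩ := hdvd
        refine ⟨q + 1, ?_⟩
        rw [Nat.mul_succ]
        omega
      have hc2 : c (n + m) = a ^ (n + 1) / ((n + m).factorial : ℝ) := by
        have harg : n + m + 1 - m = n + 1 := by omega
        simp only [hcdef, if_pos hdvd2, harg]
      have hc1 : c n = a ^ (n + 1 - m) / (n.factorial : ℝ) := by
        simp only [hcdef, if_pos hdvd]
      have hmle : m ≤ n + 1 := Nat.le_of_dvd (by omega) hdvd
      have hpadd : a ^ m * a ^ (n + 1 - m) = a ^ (n + 1) := by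
        rw [← pow_add]
        congr 1
        omega
      have hfp := fact_prod10 n m
      have hne1 : (n.factorial : ℝ) ≠ 0 := by positivity
      have hne2 : (((n + m).factorial : ℕ) : ℝ) ≠ 0 := by positivity
      have hprod : (∏ i ∈ Finset.range m, ((n + i + 1 : ℕ) : ℝ)) =
          ((n + m).factorial : ℝ) / (n.factorial : ℝ) := by
        rw [eq_div_iff hne1, mul_comm]
        exact hfp
      rw [hc2, hc1, hprod, ← hpadd]
      field_simp
    · have hdvd2 : ¬ m ∣ (n + m) + 1 := by
        intro hcon
        apply hdvd
        obtain ⟨q, hq⟩ := hcon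
        have hq0 : q ≠ 0 := by rintro rfl; omega
        obtain ⟨k, rfl⟩ : ∃ k, q = k + 1 := ⟨q - 1, by omega⟩
        rw [Nat.mul_succ] at hq
        exact ⟨k, by omega⟩
      have hc2 : c (n + m) = 0 := by simp only [hcdef, if_neg hdvd2]
      have hc1 : c n = 0 := by simp only [hcdef, if_neg hdvd]
      rw [hc2, hc1, mul_zero, mul_zero]
  rw [hfun, hiter]
  calc pS10 (shiftc10^[m] c) u = ∑' n : ℕ, a ^ m * (c n * u ^ n) := by
        rw [pS10]
        exact tsum_congr fun n => by rw [hcoeff n]; ring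
    _ = a ^ m * pS10 c u := by rw [pS10, tsum_mul_left]
end

section
/- Let λ, c > 0. Define p : ℝ² × (0,∞) → ℝ on the open cone {(x₁,x₂,t) : x₁² + x₂² < c²t², t > 0} by p(x₁,x₂,t) = (λ/(2πc)) · (1/sinh(λt)) · cosh((λ/c)√(c²t² − x₁² − x₂²)) / √(c²t² − x₁² − x₂²). Then p satisfies the two-dimensional telegraph-type equation with time-varying coefficient ∂²p/∂t² + 2λ coth(λt) ∂p/∂t − c² (∂²p/∂x₁² + ∂²p/∂x₂²) = 0 on the open cone. -/
/-!
Write `p(x₁,x₂,t) = H(t) G(w)` with `w = c²t² - x₁² - x₂²`, `H(t) = K / sinh(λt)` and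
`G(w) = cosh(a√w)/√w`, `a = λ/c`. For such a product the telegraph operator equals
`G (H'' + 2λ coth H') + 4c²t G' (H' + λ coth H) + c² H (4wG'' + 6G')`.
The time factor solves `H' = -λ coth(λt) H`, which kills the middle term and, since
`coth² - 1/sinh² = 1`, turns the first into `-λ² H G`. In the variable `w = r²`,
`4w d²/dw² + 6 d/dw` is the radial Laplacian of `ℝ³`, and `cosh(ar)/r` is its radial solution of
`Δu = a²u`; so the last term is `c²a² H G = λ² H G`.
-/

open Real Filter Topology

theorem iteratedDeriv_two_eq_of_hasDerivAt {f f' : ℝ → ℝ} {f'' x : ℝ}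
    (hf : ∀ᶠ y in 𝓝 x, HasDerivAt f (f' y) y) (hf' : HasDerivAt f' f'' x) :
    iteratedDeriv 2 f x = f'' := by
  have hderiv : deriv f =ᶠ[𝓝 x] f' := hf.mono fun y hy => hy.deriv
  rw [iteratedDeriv_succ, iteratedDeriv_one, hderiv.deriv_eq]
  exact hf'.deriv

theorem iteratedDeriv_two_mul_comp {H H' G G' q q' : ℝ → ℝ} {H'' G'' q'' x : ℝ}
    (hH : ∀ᶠ y in 𝓝 x, HasDerivAt H (H' y) y) (hH' : HasDerivAt H' H'' x)
    (hq : ∀ᶠ y in 𝓝 x, HasDerivAt q (q' y) y) (hq' : HasDerivAt q' q'' x)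
    (hG : ∀ᶠ w in 𝓝 (q x), HasDerivAt G (G' w) w) (hG' : HasDerivAt G' G'' (q x)) :
    iteratedDeriv 2 (fun y => H y * G (q y)) x =
      H'' * G (q x) + 2 * H' x * G' (q x) * q' x
        + H x * (G'' * q' x ^ 2 + G' (q x) * q'') := by
  have hq₀ := hq.self_of_nhds
  have hGq : ∀ᶠ y in 𝓝 x, HasDerivAt G (G' (q y)) (q y) :=
    hq₀.continuousAt.tendsto.eventually hG
  refine iteratedDeriv_two_eq_of_hasDerivAt
    (f' := fun y => H' y * G (q y) + H y * (G' (q y) * q' y)) ?_ ?_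
  · filter_upwards [hH, hq, hGq] with y hHy hqy hGy
    exact hHy.mul (hGy.comp y hqy)
  · refine ((hH'.mul (hG.self_of_nhds.comp x hq₀)).add
      (hH.self_of_nhds.mul ((hG'.comp x hq₀).mul hq'))).congr_deriv ?_
    simp only [Function.comp_apply, Pi.mul_apply]
    ring

theorem hasDerivAt_cosh_div_sinh {lam s : ℝ} (h : sinh (lam * s) ≠ 0) :
    HasDerivAt (fun s => cosh (lam * s) / sinh (lam * s)) (-(lam / sinh (lam * s) ^ 2)) s := by
  have hlin : HasDerivAt (fun s => lam * s) lam s := by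
    simpa using (hasDerivAt_id s).const_mul lam
  refine (hlin.cosh.div hlin.sinh h).congr_deriv ?_
  field_simp
  linear_combination -lam * cosh_sq_sub_sinh_sq (lam * s)

theorem hasDerivAt_div_sinh (K : ℝ) {lam s : ℝ} (h : sinh (lam * s) ≠ 0) :
    HasDerivAt (fun s => K / sinh (lam * s))
      (-(lam * (cosh (lam * s) / sinh (lam * s)) * (K / sinh (lam * s)))) s := by
  have hlin : HasDerivAt (fun s => lam * s) lam s := by
    simpa using (hasDerivAt_id s).const_mul lam
  refine ((hasDerivAt_const s K).div hlin.sinh h).congr_deriv ?_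
  field_simp
  ring

theorem hasDerivAt_neg_mul_coth_mul {lam s : ℝ} {H : ℝ → ℝ} (hs : sinh (lam * s) ≠ 0)
    (hH : HasDerivAt H (-(lam * (cosh (lam * s) / sinh (lam * s)) * H s)) s) :
    HasDerivAt (fun s => -(lam * (cosh (lam * s) / sinh (lam * s)) * H s))
      (lam ^ 2 * (2 * (cosh (lam * s) / sinh (lam * s)) ^ 2 - 1) * H s) s := by
  refine (((hasDerivAt_cosh_div_sinh hs).const_mul lam).mul hH).neg.congr_deriv ?_
  field_simp
  linear_combination -lam ^ 2 * H s * cosh_sq_sub_sinh_sq (lam * s)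

theorem sum_iteratedDeriv_two_of_separated {H G G' : ℝ → ℝ} {G'' c x₁ x₂ t : ℝ}
    {p : ℝ → ℝ → ℝ → ℝ} (hp : ∀ x₁ x₂ t, p x₁ x₂ t = H t * G (c ^ 2 * t ^ 2 - x₁ ^ 2 - x₂ ^ 2))
    (hG : ∀ᶠ v in 𝓝 (c ^ 2 * t ^ 2 - x₁ ^ 2 - x₂ ^ 2), HasDerivAt G (G' v) v)
    (hG' : HasDerivAt G' G'' (c ^ 2 * t ^ 2 - x₁ ^ 2 - x₂ ^ 2)) :
    iteratedDeriv 2 (fun s => p s x₂ t) x₁ + iteratedDeriv 2 (fun s => p x₁ s t) x₂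
      = H t * (4 * (x₁ ^ 2 + x₂ ^ 2) * G'' - 4 * G' (c ^ 2 * t ^ 2 - x₁ ^ 2 - x₂ ^ 2)) := by
  have hconst : ∀ y, HasDerivAt (fun _ : ℝ => H t) 0 y := fun y => hasDerivAt_const y (H t)
  have hq₁ : ∀ y, HasDerivAt (fun y => c ^ 2 * t ^ 2 - y ^ 2 - x₂ ^ 2) (-2 * y) y := by
    intro y
    simpa using ((hasDerivAt_pow 2 y).const_sub (c ^ 2 * t ^ 2)).sub_const (x₂ ^ 2)
  have hq₂ : ∀ y, HasDerivAt (fun y => c ^ 2 * t ^ 2 - x₁ ^ 2 - y ^ 2) (-2 * y) y := by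
    intro y
    simpa using (hasDerivAt_pow 2 y).const_sub (c ^ 2 * t ^ 2 - x₁ ^ 2)
  have hq' : ∀ y, HasDerivAt (fun y : ℝ => -2 * y) (-2) y := by
    intro y
    simpa using (hasDerivAt_id y).const_mul (-2)
  have h₁₁ := iteratedDeriv_two_mul_comp (.of_forall hconst) (hasDerivAt_const x₁ 0)
    (.of_forall hq₁) (hq' x₁) hG hG'
  have h₂₂ := iteratedDeriv_two_mul_comp (.of_forall hconst) (hasDerivAt_const x₂ 0)
    (.of_forall hq₂) (hq' x₂) hG hG'
  simp only [funext fun s => hp s x₂ t, funext fun s => hp x₁ s t, h₁₁, h₂₂]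
  ring

theorem telegraph_of_separated {lam c a : ℝ} (hlam : lam ≠ 0) (hca : c * a = lam)
    {H G G' : ℝ → ℝ}
    (hH : ∀ s > 0, HasDerivAt H (-(lam * (cosh (lam * s) / sinh (lam * s)) * H s)) s)
    (hG : ∀ w > 0, HasDerivAt G (G' w) w)
    (hG' : ∀ w > 0, HasDerivAt G' ((a ^ 2 * G w - 6 * G' w) / (4 * w)) w)
    {p : ℝ → ℝ → ℝ → ℝ} (hp : ∀ x₁ x₂ t, p x₁ x₂ t = H t * G (c ^ 2 * t ^ 2 - x₁ ^ 2 - x₂ ^ 2))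
    {x₁ x₂ t : ℝ} (ht : 0 < t) (hcone : x₁ ^ 2 + x₂ ^ 2 < c ^ 2 * t ^ 2) :
    iteratedDeriv 2 (fun s => p x₁ x₂ s) t
        + 2 * lam * (cosh (lam * t) / sinh (lam * t)) * deriv (fun s => p x₁ x₂ s) t
        - c ^ 2 * (iteratedDeriv 2 (fun s => p s x₂ t) x₁
            + iteratedDeriv 2 (fun s => p x₁ s t) x₂) = 0 := by
  set w := c ^ 2 * t ^ 2 - x₁ ^ 2 - x₂ ^ 2 with hw_def
  have hw : 0 < w := by linarith
  set κ := cosh (lam * t) / sinh (lam * t) with hκ_def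
  have hH_near : ∀ᶠ s in 𝓝 t, HasDerivAt H (-(lam * (cosh (lam * s) / sinh (lam * s)) * H s)) s :=
    eventually_of_mem (Ioi_mem_nhds ht) hH
  have hH' := hasDerivAt_neg_mul_coth_mul (sinh_ne_zero.mpr (mul_ne_zero hlam ht.ne')) (hH t ht)
  have hG_near : ∀ᶠ v in 𝓝 w, HasDerivAt G (G' v) v := eventually_of_mem (Ioi_mem_nhds hw) hG
  set G'' := (a ^ 2 * G w - 6 * G' w) / (4 * w) with hG''_def
  have hG'' : 4 * w * G'' = a ^ 2 * G w - 6 * G' w := by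
    rw [hG''_def]; field_simp
  have hq : ∀ s, HasDerivAt (fun s => c ^ 2 * s ^ 2 - x₁ ^ 2 - x₂ ^ 2) (2 * c ^ 2 * s) s := by
    intro s
    refine ((((hasDerivAt_pow 2 s).const_mul (c ^ 2)).sub_const (x₁ ^ 2)).sub_const
      (x₂ ^ 2)).congr_deriv ?_
    simp only [Nat.cast_ofNat]
    ring
  have hq' : HasDerivAt (fun s => 2 * c ^ 2 * s) (2 * c ^ 2) t := by
    simpa using (hasDerivAt_id t).const_mul (2 * c ^ 2)
  have h_tt := iteratedDeriv_two_mul_comp hH_near hH' (.of_forall hq) hq' hG_near (hG' w hw)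
  have h_t : deriv (fun s => H s * G (c ^ 2 * s ^ 2 - x₁ ^ 2 - x₂ ^ 2)) t
      = -(lam * κ * H t) * G w + H t * (G' w * (2 * c ^ 2 * t)) :=
    ((hH t ht).mul ((hG w hw).comp t (hq t))).deriv
  rw [sum_iteratedDeriv_two_of_separated hp hG_near (hG' w hw)]
  simp only [funext fun s => hp x₁ x₂ s, h_tt, h_t]
  linear_combination (-4 * c ^ 2 * H t * G'') * hw_def + c ^ 2 * H t * hG''
    + (c * a + lam) * H t * G w * hca

noncomputable def coshRadial (a w : ℝ) : ℝ := cosh (a * √w) / √w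

noncomputable def coshRadialDeriv (a w : ℝ) : ℝ := (a * sinh (a * √w) - coshRadial a w) / (2 * w)

theorem hasDerivAt_coshRadial (a : ℝ) {w : ℝ} (hw : 0 < w) :
    HasDerivAt (coshRadial a) (coshRadialDeriv a w) w := by
  have hr : 0 < √w := sqrt_pos.mpr hw
  have hsqrt : HasDerivAt (fun w => a * √w) (a * (1 / (2 * √w))) w :=
    (hasDerivAt_sqrt hw.ne').const_mul a
  refine (hsqrt.cosh.div (hasDerivAt_sqrt hw.ne') hr.ne').congr_deriv ?_
  obtain ⟨r, hr₀, rfl⟩ : ∃ r > 0, r ^ 2 = w := ⟨√w, hr, sq_sqrt hw.le⟩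
  simp only [coshRadialDeriv, coshRadial, sqrt_sq hr₀.le]
  field_simp

theorem hasDerivAt_coshRadialDeriv (a : ℝ) {w : ℝ} (hw : 0 < w) :
    HasDerivAt (coshRadialDeriv a)
      ((a ^ 2 * coshRadial a w - 6 * coshRadialDeriv a w) / (4 * w)) w := by
  have hr : 0 < √w := sqrt_pos.mpr hw
  have hsqrt : HasDerivAt (fun w => a * √w) (a * (1 / (2 * √w))) w :=
    (hasDerivAt_sqrt hw.ne').const_mul a
  have hlin : HasDerivAt (fun w : ℝ => 2 * w) 2 w := by
    simpa using (hasDerivAt_id w).const_mul 2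
  refine (((hsqrt.sinh.const_mul a).sub (hasDerivAt_coshRadial a hw)).div hlin
    (by positivity)).congr_deriv ?_
  obtain ⟨r, hr₀, rfl⟩ : ∃ r > 0, r ^ 2 = w := ⟨√w, hr, sq_sqrt hw.le⟩
  simp only [coshRadialDeriv, coshRadial, Pi.sub_apply, sqrt_sq hr₀.le]
  field_simp
  ring

/-- the projection onto the plane of the full law of `X₃(t)`,
`p(x₁,x₂,t) = (λ/(2πc)) (1/sinh λt) cosh((λ/c)√(c²t²-x₁²-x₂²))/√(c²t²-x₁²-x₂²)`,
satisfies the two-dimensional telegraph-type equation with time-varying coefficient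
`∂²p/∂t² + 2λ coth(λt) ∂p/∂t - c²(∂²p/∂x₁² + ∂²p/∂x₂²) = 0` on the open cone
`{(x₁,x₂,t) : x₁² + x₂² < c²t², t > 0}`. -/
theorem statement14 (lam c : ℝ) (hlam : 0 < lam) (hc : 0 < c)
    (p : ℝ → ℝ → ℝ → ℝ)
    (hp : ∀ x₁ x₂ t : ℝ, p x₁ x₂ t =
      lam / (2 * π * c) * (1 / Real.sinh (lam * t)) *
        Real.cosh (lam / c * Real.sqrt (c ^ 2 * t ^ 2 - x₁ ^ 2 - x₂ ^ 2)) /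
        Real.sqrt (c ^ 2 * t ^ 2 - x₁ ^ 2 - x₂ ^ 2)) :
    ∀ x₁ x₂ t : ℝ, 0 < t → x₁ ^ 2 + x₂ ^ 2 < c ^ 2 * t ^ 2 →
      iteratedDeriv 2 (fun s => p x₁ x₂ s) t
        + 2 * lam * (Real.cosh (lam * t) / Real.sinh (lam * t)) *
            deriv (fun s => p x₁ x₂ s) t
        - c ^ 2 * (iteratedDeriv 2 (fun s => p s x₂ t) x₁
            + iteratedDeriv 2 (fun s => p x₁ s t) x₂) = 0 := by
  intro x₁ x₂ t ht hcone
  have hp' : ∀ x₁ x₂ t, p x₁ x₂ t = lam / (2 * π * c) / sinh (lam * t)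
      * coshRadial (lam / c) (c ^ 2 * t ^ 2 - x₁ ^ 2 - x₂ ^ 2) := by
    intro x₁ x₂ t
    rw [hp, coshRadial]
    ring
  exact telegraph_of_separated hlam.ne' (mul_div_cancel₀ lam hc.ne')
    (fun s hs => hasDerivAt_div_sinh _ (sinh_ne_zero.mpr (mul_pos hlam hs).ne'))
    (fun w hw => hasDerivAt_coshRadial _ hw) (fun w hw => hasDerivAt_coshRadialDeriv _ hw)
    hp' ht hcone
end
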